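/- arXiv:1807.03475 — 6 statements merged into one kernel-verified Lean document; each statement's English description precedes it below -/
import Mathlib

section
/- Let V : ℝⁿ → ℝ be a differentiable nonnegative function and let b > 0 and r > 0 satisfy b·V(x) ≤ ‖∇V(x)‖² for every x ∈ ℝⁿ with V(x) < r. Let x : [0,∞) → ℝⁿ be differentiable with V(x(0)) < r, and suppose that for every t ≥ 0 the velocity satisfies ⟨∇V(x(t)), ẋ(t)⟩ = −‖∇V(x(t))‖² (i.e., ẋ decomposes as a vector annihilated by ∇V minus the gradient ∇V(x)). Then V(x(t)) ≤ V(x(0))·e^{−bt} for all t ≥ 0; in particular the sublevel set {V < r} is positively invariant along this trajectory, i.e., V(x(t)) < r for all t ≥ 0. -/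
/-!
Along the trajectory, `d/dt V(x t) = ⟪∇V, ẋ⟫ = -‖∇V(x t)‖² ≤ 0`, so `V ∘ x` is antitone on
`[0, ∞)` and the trajectory never leaves the sublevel set `{V < r}`. Inside that set the
gradient inequality turns this into `d/dt V(x t) ≤ -b V(x t)`, and Grönwall's inequality gives
the exponential decay.
-/

open scoped RealInnerProductSpace
open Set Real

theorem HasGradientAt.hasDerivAt_comp {E : Type*} [NormedAddCommGroup E]
    [InnerProductSpace ℝ E] [CompleteSpace E] {V : E → ℝ} {g : E} {x : ℝ → E} {v : E} {t : ℝ}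
    (hV : HasGradientAt V g (x t)) (hx : HasDerivAt x v t) :
    HasDerivAt (fun s => V (x s)) ⟪g, v⟫ t := by
  simpa [Function.comp_def] using hV.hasFDerivAt.comp_hasDerivAt t hx

theorem antitoneOn_Ici_of_hasDerivAt_nonpos {f f' : ℝ → ℝ} {a : ℝ}
    (hf : ∀ t ∈ Ici a, HasDerivAt f (f' t) t) (hf' : ∀ t ∈ Ici a, f' t ≤ 0) :
    AntitoneOn f (Ici a) :=
  antitoneOn_of_hasDerivWithinAt_nonpos (convex_Ici a) (HasDerivAt.continuousOn hf)
    (fun t ht => (hf t (interior_subset ht)).hasDerivWithinAt)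
    (fun t ht => hf' t (interior_subset ht))

theorem le_mul_exp_of_hasDerivAt_le_mul {f f' : ℝ → ℝ} {a K : ℝ}
    (hf : ∀ t ∈ Ici a, HasDerivAt f (f' t) t) (bound : ∀ t ∈ Ici a, f' t ≤ K * f t) :
    ∀ t ∈ Ici a, f t ≤ f a * exp (K * (t - a)) := by
  intro t ht
  have := le_gronwallBound_of_liminf_deriv_right_le (b := t) (δ := f a) (ε := 0)
    (HasDerivAt.continuousOn fun s hs => hf s hs.1)
    (fun s hs _ hr => (hf s hs.1).hasDerivWithinAt.liminf_right_slope_le hr) le_rfl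
    (fun s hs => by simpa using bound s hs.1) t ⟨ht, le_rfl⟩
  rwa [gronwallBound_ε0] at this

theorem sublevel_invariant_exp_decay_general
    (n : ℕ) (V : EuclideanSpace ℝ (Fin n) → ℝ)
    (hVdiff : Differentiable ℝ V)
    (b r : ℝ)
    (hgrad : ∀ x, V x < r → b * V x ≤ ‖gradient V x‖ ^ 2)
    (x : ℝ → EuclideanSpace ℝ (Fin n)) (x' : ℝ → EuclideanSpace ℝ (Fin n))
    (hx : ∀ t, 0 ≤ t → HasDerivAt x (x' t) t)
    (hvel : ∀ t, 0 ≤ t →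
      ⟪gradient V (x t), x' t⟫ = -‖gradient V (x t)‖ ^ 2)
    (h0 : V (x 0) < r) :
    ∀ t, 0 ≤ t → V (x t) ≤ V (x 0) * Real.exp (-b * t) ∧ V (x t) < r := by
  have hderiv : ∀ t ∈ Ici (0 : ℝ),
      HasDerivAt (fun s => V (x s)) (-‖gradient V (x t)‖ ^ 2) t := fun t ht =>
    hvel t ht ▸ (hVdiff (x t)).hasGradientAt.hasDerivAt_comp (hx t ht)
  have hsublevel : ∀ t, 0 ≤ t → V (x t) < r := fun t ht =>
    (antitoneOn_Ici_of_hasDerivAt_nonpos hderiv (fun _ _ => neg_nonpos.2 (sq_nonneg _))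
      self_mem_Ici ht ht).trans_lt h0
  intro t ht
  refine ⟨?_, hsublevel t ht⟩
  have hdecay := le_mul_exp_of_hasDerivAt_le_mul (K := -b) hderiv
    (fun s hs => by linarith [hgrad _ (hsublevel s hs)]) t ht
  simpa using hdecay

/-- Transversal stabilization estimate (Theorem 1).  If `V : ℝⁿ → ℝ` is a
differentiable nonnegative function with `b·V(x) ≤ ‖∇V(x)‖²` on the sublevel set
`{V < r}`, and a differentiable trajectory `x(t)` starting in that sublevel set
satisfies `⟨∇V(x(t)), ẋ(t)⟩ = −‖∇V(x(t))‖²` for all `t ≥ 0`, then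
`V(x(t)) ≤ V(x(0))·e^{−bt}` and in particular `V(x(t)) < r` for all `t ≥ 0`. -/
theorem sublevel_invariant_exp_decay
    (n : ℕ) (V : EuclideanSpace ℝ (Fin n) → ℝ)
    (hVdiff : Differentiable ℝ V) (hVnonneg : ∀ x, 0 ≤ V x)
    (b r : ℝ) (hb : 0 < b) (hr : 0 < r)
    (hgrad : ∀ x, V x < r → b * V x ≤ ‖gradient V x‖ ^ 2)
    (x : ℝ → EuclideanSpace ℝ (Fin n)) (x' : ℝ → EuclideanSpace ℝ (Fin n))
    (hx : ∀ t, 0 ≤ t → HasDerivAt x (x' t) t)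
    (hvel : ∀ t, 0 ≤ t →
      ⟪gradient V (x t), x' t⟫ = -‖gradient V (x t)‖ ^ 2)
    (h0 : V (x 0) < r) :
    ∀ t, 0 ≤ t → V (x t) ≤ V (x 0) * Real.exp (-b * t) ∧ V (x t) < r :=
  sublevel_invariant_exp_decay_general n V hVdiff b r hgrad x x' hx hvel h0
end

section
/- Let F : ℝⁿ → ℝ^{n−m} be continuously differentiable, let K be an (n−m)×(n−m) positive definite symmetric matrix, and define Ṽ(x) = F(x)ᵀ K F(x), so that ∇Ṽ(x) = 2·DF(x)ᵀ K F(x). Let S ⊆ ℝⁿ and c > 0 be such that for every x ∈ S the smallest singular value of the Jacobian DF(x) is at least c. Set b = 4c²·λ_min(K)² / λ_max(K) and A = √(λ_max(K)/λ_min(K)). If x : [0,∞) → ℝⁿ is a differentiable curve with x(t) ∈ S for all t ≥ 0 and ⟨∇Ṽ(x(t)), ẋ(t)⟩ = −‖∇Ṽ(x(t))‖² for all t ≥ 0, then ‖F(x(t))‖ ≤ A·‖F(x(0))‖·e^{−bt/2} for all t ≥ 0. -/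
/-!
Along the curve, `Ṽ(x(t))` decreases at rate `‖∇Ṽ‖²`. On `S` the Jacobian bound gives
`‖∇Ṽ‖ = 2‖DFᵀ K F‖ ≥ 2c λ_min ‖F‖`, while `Ṽ ≤ λ_max ‖F‖²`, so `d/dt Ṽ(x(t)) ≤ -b Ṽ(x(t))` and
Grönwall yields `Ṽ(x(t)) ≤ Ṽ(x(0)) e^{-bt}`. Sandwiching `λ_min ‖F‖² ≤ Ṽ ≤ λ_max ‖F‖²` at both
ends and taking square roots gives the claim.
-/

open scoped RealInnerProductSpace

namespace Matrix.IsHermitian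

variable {ι : Type*} [Fintype ι] [DecidableEq ι] {K : Matrix ι ι ℝ} (hK : K.IsHermitian)
include hK

lemma toEuclideanCLM_eigenvectorBasis (i : ι) :
    toEuclideanCLM (𝕜 := ℝ) K (hK.eigenvectorBasis i) =
      hK.eigenvalues i • hK.eigenvectorBasis i :=
  WithLp.ofLp_injective 2 (by simpa using hK.mulVec_eigenvectorBasis i)

lemma inner_toEuclideanCLM_self_eq_sum (v : EuclideanSpace ℝ ι) :
    ⟪v, toEuclideanCLM (𝕜 := ℝ) K v⟫ =
      ∑ i, hK.eigenvalues i * ⟪v, hK.eigenvectorBasis i⟫ ^ 2 := by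
  have hsymm : (toEuclideanCLM (𝕜 := ℝ) K : EuclideanSpace ℝ ι →ₗ[ℝ] _).IsSymmetric :=
    (IsSelfAdjoint.map hK (toEuclideanCLM (𝕜 := ℝ))).isSymmetric
  rw [← hK.eigenvectorBasis.sum_inner_mul_inner]
  refine Finset.sum_congr rfl fun i _ => ?_
  have := hsymm (hK.eigenvectorBasis i) v
  simp only [ContinuousLinearMap.coe_coe, hK.toEuclideanCLM_eigenvectorBasis, inner_smul_left] at this
  rw [← this]
  simp only [RCLike.conj_to_real, real_inner_comm v]
  ring

lemma mul_norm_sq_le_inner_toEuclideanCLM_self {l : ℝ} (hl : ∀ i, l ≤ hK.eigenvalues i)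
    (v : EuclideanSpace ℝ ι) : l * ‖v‖ ^ 2 ≤ ⟪v, toEuclideanCLM (𝕜 := ℝ) K v⟫ := by
  rw [hK.inner_toEuclideanCLM_self_eq_sum, ← hK.eigenvectorBasis.sum_sq_inner_left, Finset.mul_sum]
  exact Finset.sum_le_sum fun i _ => mul_le_mul_of_nonneg_right (hl i) (sq_nonneg _)

lemma inner_toEuclideanCLM_self_le_mul_norm_sq {l : ℝ} (hl : ∀ i, hK.eigenvalues i ≤ l)
    (v : EuclideanSpace ℝ ι) : ⟪v, toEuclideanCLM (𝕜 := ℝ) K v⟫ ≤ l * ‖v‖ ^ 2 := by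
  rw [hK.inner_toEuclideanCLM_self_eq_sum, ← hK.eigenvectorBasis.sum_sq_inner_left, Finset.mul_sum]
  exact Finset.sum_le_sum fun i _ => mul_le_mul_of_nonneg_right (hl i) (sq_nonneg _)

lemma mul_norm_le_norm_toEuclideanCLM {l : ℝ} (hl : ∀ i, l ≤ hK.eigenvalues i)
    (v : EuclideanSpace ℝ ι) : l * ‖v‖ ≤ ‖toEuclideanCLM (𝕜 := ℝ) K v‖ := by
  rcases (norm_nonneg v).eq_or_lt with hv | hv
  · simp [← hv]
  refine le_of_mul_le_mul_right ?_ hv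
  calc l * ‖v‖ * ‖v‖ = l * ‖v‖ ^ 2 := by ring
    _ ≤ ⟪v, toEuclideanCLM (𝕜 := ℝ) K v⟫ := hK.mul_norm_sq_le_inner_toEuclideanCLM_self hl v
    _ ≤ ‖v‖ * ‖toEuclideanCLM (𝕜 := ℝ) K v‖ := real_inner_le_norm _ _
    _ = _ := mul_comm _ _

lemma mul_inner_toEuclideanCLM_self_le_norm_sq_two_smul_adjoint {E : Type*}
    [NormedAddCommGroup E] [InnerProductSpace ℝ E] [CompleteSpace E] {lmin lmax c : ℝ}
    (hlmin₀ : 0 ≤ lmin) (hlmax₀ : 0 < lmax) (hc : 0 ≤ c)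
    (hlmin : ∀ i, lmin ≤ hK.eigenvalues i) (hlmax : ∀ i, hK.eigenvalues i ≤ lmax)
    (A : E →L[ℝ] EuclideanSpace ℝ ι) (hA : ∀ w, c * ‖w‖ ≤ ‖ContinuousLinearMap.adjoint A w‖)
    (v : EuclideanSpace ℝ ι) :
    4 * c ^ 2 * lmin ^ 2 / lmax * ⟪v, toEuclideanCLM (𝕜 := ℝ) K v⟫ ≤
      ‖(2 : ℝ) • ContinuousLinearMap.adjoint A (toEuclideanCLM (𝕜 := ℝ) K v)‖ ^ 2 := by
  have hgrad : 2 * c * lmin * ‖v‖ ≤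
      ‖(2 : ℝ) • ContinuousLinearMap.adjoint A (toEuclideanCLM (𝕜 := ℝ) K v)‖ := by
    rw [norm_smul, Real.norm_two, mul_assoc, mul_assoc]
    gcongr
    exact (mul_le_mul_of_nonneg_left (hK.mul_norm_le_norm_toEuclideanCLM hlmin v) hc).trans
      (hA _)
  calc 4 * c ^ 2 * lmin ^ 2 / lmax * ⟪v, toEuclideanCLM (𝕜 := ℝ) K v⟫
      ≤ 4 * c ^ 2 * lmin ^ 2 / lmax * (lmax * ‖v‖ ^ 2) := by
        gcongr
        exact hK.inner_toEuclideanCLM_self_le_mul_norm_sq hlmax v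
    _ = (2 * c * lmin * ‖v‖) ^ 2 := by field_simp; ring
    _ ≤ _ := pow_le_pow_left₀ (by positivity) hgrad 2

end Matrix.IsHermitian

lemma le_mul_exp_of_hasDerivAt_le_neg_mul {φ φ' : ℝ → ℝ} {b : ℝ}
    (hφ : ∀ t, 0 ≤ t → HasDerivAt φ (φ' t) t) (hle : ∀ t, 0 ≤ t → φ' t ≤ -b * φ t)
    (t : ℝ) (ht : 0 ≤ t) : φ t ≤ φ 0 * Real.exp (-b * t) := by
  have := le_gronwallBound_of_liminf_deriv_right_le (f := φ) (f' := φ') (δ := φ 0) (K := -b)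
    (ε := 0) (a := 0) (b := t)
    (fun s hs => (hφ s hs.1).continuousAt.continuousWithinAt)
    (fun s hs _ hr => (hφ s hs.1).hasDerivWithinAt.liminf_right_slope_le hr) le_rfl
    (fun s hs => by simpa using hle s hs.1) t ⟨ht, le_rfl⟩
  simpa [gronwallBound_ε0] using this

lemma abs_le_sqrt_div_mul_mul_exp_half {a b l L k t : ℝ} (hl : 0 < l) (hb : 0 ≤ b)
    (h : l * a ^ 2 ≤ L * b ^ 2 * Real.exp (-k * t)) :
    |a| ≤ Real.sqrt (L / l) * b * Real.exp (-k / 2 * t) := by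
  have hexp : Real.exp (-k * t) = Real.exp (-k / 2 * t) ^ 2 := by
    rw [← Real.exp_nat_mul]; ring_nf
  rw [← Real.sqrt_sq_eq_abs, ← Real.sqrt_sq hb, ← Real.sqrt_sq (Real.exp_pos (-k / 2 * t)).le,
    ← Real.sqrt_mul', ← Real.sqrt_mul']
  · apply Real.sqrt_le_sqrt
    rw [div_mul_eq_mul_div, div_mul_eq_mul_div, le_div_iff₀ hl, ← hexp]
    linarith
  all_goals positivity

/-- Corollary 1: exponential convergence to the zero level set `M = F⁻¹(0)`.
With `Ṽ(x) = F(x)ᵀ K F(x)` (so `∇Ṽ(x) = 2 DF(x)ᵀ K F(x)`), if the smallest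
singular value of `DF(x)` is at least `c` on `S` (encoded as
`c‖w‖ ≤ ‖DF(x)ᵀ w‖` for all `w`), and a differentiable curve `x(t)` stays
in `S` and satisfies `⟨∇Ṽ(x(t)), ẋ(t)⟩ = −‖∇Ṽ(x(t))‖²`, then with
`b = 4c²λ_min(K)²/λ_max(K)` and `A = √(λ_max(K)/λ_min(K))` one has
`‖F(x(t))‖ ≤ A‖F(x(0))‖e^{−bt/2}` for all `t ≥ 0`. -/
theorem exp_convergence_to_level_set
    (n m' : ℕ) (F : EuclideanSpace ℝ (Fin n) → EuclideanSpace ℝ (Fin m'))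
    (hF : ContDiff ℝ 1 F)
    (K : Matrix (Fin m') (Fin m') ℝ) (hK : K.PosDef)
    (Vt : EuclideanSpace ℝ (Fin n) → ℝ)
    (hVt : ∀ x, Vt x = dotProduct (F x) (K.mulVec (F x)))
    (hgradVt : ∀ x, gradient Vt x =
      (2:ℝ) • (ContinuousLinearMap.adjoint (fderiv ℝ F x))
        ((WithLp.equiv 2 (Fin m' → ℝ)).symm (K.mulVec (F x))))
    (S : Set (EuclideanSpace ℝ (Fin n))) (c : ℝ) (hc : 0 < c)
    (hsing : ∀ x ∈ S, ∀ w : EuclideanSpace ℝ (Fin m'),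
      c * ‖w‖ ≤ ‖(ContinuousLinearMap.adjoint (fderiv ℝ F x)) w‖)
    (lmin lmax : ℝ)
    (hlmin : IsLeast (Set.range hK.1.eigenvalues) lmin)
    (hlmax : IsGreatest (Set.range hK.1.eigenvalues) lmax)
    (x : ℝ → EuclideanSpace ℝ (Fin n)) (x' : ℝ → EuclideanSpace ℝ (Fin n))
    (hx : ∀ t, 0 ≤ t → HasDerivAt x (x' t) t)
    (hxS : ∀ t, 0 ≤ t → x t ∈ S)
    (hvel : ∀ t, 0 ≤ t →
      ⟪gradient Vt (x t), x' t⟫ = -‖gradient Vt (x t)‖ ^ 2) :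
    ∀ t, 0 ≤ t →
      ‖F (x t)‖ ≤ Real.sqrt (lmax / lmin) * ‖F (x 0)‖ *
        Real.exp (-(4 * c ^ 2 * lmin ^ 2 / lmax) / 2 * t) := by
  set b := 4 * c ^ 2 * lmin ^ 2 / lmax
  set Kc := Matrix.toEuclideanCLM (𝕜 := ℝ) K
  have hlmin_le (i) : lmin ≤ hK.1.eigenvalues i := hlmin.2 ⟨i, rfl⟩
  have hle_lmax (i) : hK.1.eigenvalues i ≤ lmax := hlmax.2 ⟨i, rfl⟩
  have hlmin₀ : 0 < lmin := hlmin.1.elim fun i hi => hi ▸ hK.eigenvalues_pos i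
  have hlmax₀ : 0 < lmax := hlmax.1.elim fun i hi => hi ▸ hK.eigenvalues_pos i
  have hV (y) : Vt y = ⟪F y, Kc (F y)⟫ := (hVt y).trans (Matrix.inner_toEuclideanCLM K _ _).symm
  have hFdiff := hF.differentiable one_ne_zero
  have hVdiff : Differentiable ℝ Vt := by
    rw [funext hV]
    exact hFdiff.inner ℝ (Kc.differentiable.comp hFdiff)
  have hderiv (t) (ht : 0 ≤ t) : HasDerivAt (Vt ∘ x) (-‖gradient Vt (x t)‖ ^ 2) t := by
    rw [← hvel t ht, inner_gradient_left]
    exact (hVdiff (x t)).hasFDerivAt.comp_hasDerivAt t (hx t ht)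
  have hlyapunov (t) (ht : 0 ≤ t) : b * Vt (x t) ≤ ‖gradient Vt (x t)‖ ^ 2 := by
    rw [hV, hgradVt]
    exact hK.1.mul_inner_toEuclideanCLM_self_le_norm_sq_two_smul_adjoint hlmin₀.le hlmax₀ hc.le
      hlmin_le hle_lmax _ (hsing _ (hxS t ht)) _
  have hdecay := le_mul_exp_of_hasDerivAt_le_neg_mul (b := b) hderiv fun t ht => by
    rw [Function.comp_apply]
    linarith [hlyapunov t ht]
  intro t ht
  rw [← abs_norm]
  refine abs_le_sqrt_div_mul_mul_exp_half hlmin₀ (norm_nonneg _) ?_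
  calc lmin * ‖F (x t)‖ ^ 2 ≤ Vt (x t) :=
        (hV _).symm ▸ hK.1.mul_norm_sq_le_inner_toEuclideanCLM_self hlmin_le _
    _ ≤ Vt (x 0) * Real.exp (-b * t) := hdecay t ht
    _ ≤ lmax * ‖F (x 0)‖ ^ 2 * Real.exp (-b * t) := by
        gcongr
        exact (hV _).symm ▸ hK.1.inner_toEuclideanCLM_self_le_mul_norm_sq hle_lmax _
end

section
/- Let k_e > 0. There exist r > 0 and b > 0 with the following property: for every differentiable curve R : [0,∞) → ℝ^{3×3} and every curve Ω : [0,∞) → ℝ³ such that Ṙ(t) = R(t)·Ω̂(t) − k_e·R(t)(R(t)ᵀR(t) − I) for all t ≥ 0, if (k_e/4)·‖R(0)ᵀR(0) − I‖² < r then (k_e/4)·‖R(t)ᵀR(t) − I‖² < r for all t ≥ 0 and ‖R(t)ᵀR(t) − I‖ ≤ ‖R(0)ᵀR(0) − I‖·e^{−bt/2} for all t ≥ 0; in particular the trajectory converges exponentially to the set {R : RᵀR = I}. -/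
open Matrix

attribute [local instance] Matrix.frobeniusNormedAddCommGroup Matrix.frobeniusNormedSpace

noncomputable section

abbrev Mat3 := Matrix (Fin 3) (Fin 3) ℝ

/-- Frobenius inner product. -/
def finner (A B : Mat3) : ℝ := (Aᵀ * B).trace

/-- Euclidean norm on ℝ³. -/
def enorm3 (v : Fin 3 → ℝ) : ℝ := Real.sqrt (∑ i, v i ^ 2)

/-- The hat map. -/
def hat (v : Fin 3 → ℝ) : Mat3 :=
  !![0, -v 2, v 1; v 2, 0, -v 0; -v 1, v 0, 0]

/-- The vee map, inverse of the hat map on skew-symmetric matrices. -/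
def vee (A : Mat3) : Fin 3 → ℝ := ![A 2 1, A 0 2, A 1 0]

/-- The cross product on ℝ³. -/
def cross (u v : Fin 3 → ℝ) : Fin 3 → ℝ :=
  ![u 1 * v 2 - u 2 * v 1, u 2 * v 0 - u 0 * v 2, u 0 * v 1 - u 1 * v 0]

/-- Symmetrization operator. -/
def symPart (A : Mat3) : Mat3 := (2⁻¹ : ℝ) • (A + Aᵀ)

/-- Skew-symmetrization operator. -/
def skewPart (A : Mat3) : Mat3 := (2⁻¹ : ℝ) • (A - Aᵀ)

/-- `SO(3)`: rotation matrices. -/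
def SO3 : Set Mat3 := {R | Rᵀ * R = 1 ∧ 0 < R.det}

/-- The matrix commutator. -/
def mcomm (A B : Mat3) : Mat3 := A * B - B * A

/-! With `E = RᵀR - 1` and `V = ‖E‖²`, the flow gives `V' = 2 tr(E Ė) = -4 k_e (tr E³ + V)`: the
term `RΩ̂` drops out because `E` is symmetric and `Ω̂` skew-symmetric. As `|tr E³| ≤ ‖E‖³`, on
`{V < 1/16}` this is at most `-2 k_e V`, so that sublevel set can only be left through its
boundary against a negative derivative, and Grönwall's inequality gives `V(t) ≤ V(0) e^{-2 k_e t}`.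
Hence `r = k_e / 64` and `b = 2 k_e`. -/

section FrobeniusTrace

variable {m n : Type*} [Fintype m] [Fintype n]

theorem frobenius_norm_sq_eq_trace (A : Matrix m n ℝ) : ‖A‖ ^ 2 = (Aᵀ * A).trace := by
  rw [frobenius_norm_def, ← Real.rpow_natCast, ← Real.rpow_mul (by positivity)]
  simp [Matrix.trace, Matrix.mul_apply, sq, Finset.sum_comm (γ := m)]

theorem trace_transpose_mul_le_frobenius_norm_mul (A B : Matrix m n ℝ) :
    (Aᵀ * B).trace ≤ ‖A‖ * ‖B‖ := by
  have h := Real.sum_mul_le_sqrt_mul_sqrt Finset.univ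
    (fun p : m × n => A p.1 p.2) (fun p => B p.1 p.2)
  simp only [Fintype.sum_prod_type] at h
  rw [frobenius_norm_def, frobenius_norm_def]
  simpa [Matrix.trace, Matrix.mul_apply, Real.sqrt_eq_rpow, Finset.sum_comm (γ := m)] using h

theorem neg_frobenius_norm_pow_three_le_trace (A : Matrix n n ℝ) :
    -‖A‖ ^ 3 ≤ (A * A * A).trace := by
  have h := trace_transpose_mul_le_frobenius_norm_mul Aᵀ (-(A * A))
  have hAA := frobenius_norm_mul A A
  rw [transpose_transpose, Matrix.mul_neg, trace_neg, norm_neg, frobenius_norm_transpose] at h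
  rw [Matrix.mul_assoc]
  nlinarith [norm_nonneg A]

theorem neg_mul_trace_pow_three_add_le {k : ℝ} (hk : 0 ≤ k)
    {A : Matrix n n ℝ} (hA : ‖A‖ ^ 2 < 1 / 16) :
    -4 * k * ((A * A * A).trace + ‖A‖ ^ 2) ≤ -(2 * k) * ‖A‖ ^ 2 := by
  have hA4 : ‖A‖ < 1 / 4 := by nlinarith [norm_nonneg A]
  have : ‖A‖ ^ 2 / 2 ≤ (A * A * A).trace + ‖A‖ ^ 2 := by
    nlinarith [neg_frobenius_norm_pow_three_le_trace A, norm_nonneg A]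
  nlinarith

end FrobeniusTrace

theorem forall_lt_of_hasDerivAt_le_neg_mul {f f' : ℝ → ℝ} {a c ρ : ℝ} (hc : 0 < c)
    (hf : ∀ x, a ≤ x → HasDerivAt f (f' x) x) (ha : 0 ≤ f a) (hρ : f a < ρ)
    (hbound : ∀ x, a ≤ x → f x < ρ → f' x ≤ -c * f x) :
    ∀ x, a ≤ x → f x < ρ := by
  intro x hx
  obtain ⟨ρ', haρ', hρ'ρ⟩ := exists_between hρ
  have hle : f x ≤ ρ' := by
    refine image_le_of_deriv_right_lt_deriv_boundary (B := fun _ => ρ') (B' := 0)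
      (fun y hy => (hf y hy.1).continuousAt.continuousWithinAt)
      (fun y hy => (hf y hy.1).hasDerivWithinAt) (by linarith) (fun _ => hasDerivAt_const _ _)
      (fun y hy hy' => ?_) ⟨hx, le_rfl⟩
    -- the barrier `ρ'` is positive, so `f` meets it with negative speed
    have := hbound y hy.1 (by linarith)
    simp only [Pi.zero_apply]
    nlinarith
  linarith

theorem le_mul_exp_of_hasDerivAt_le_neg_mul_s7 {f f' : ℝ → ℝ} {a c : ℝ}
    (hf : ∀ x, a ≤ x → HasDerivAt f (f' x) x) (hbound : ∀ x, a ≤ x → f' x ≤ -c * f x) :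
    ∀ x, a ≤ x → f x ≤ f a * Real.exp (-c * (x - a)) := by
  intro x hx
  rw [← gronwallBound_ε0]
  refine le_gronwallBound_of_liminf_deriv_right_le (f' := f')
    (fun y hy => (hf y hy.1).continuousAt.continuousWithinAt)
    (fun y hy r hr => ?_) le_rfl (fun y hy => by simpa using hbound y hy.1) x ⟨hx, le_rfl⟩
  simpa [slope_def_field, div_eq_inv_mul] using
    (hf y hy.1).hasDerivWithinAt.liminf_right_slope_le hr

theorem Matrix.IsSymm.trace_mul_eq_zero {n α : Type*} [Fintype n] [CommRing α] [IsAddTorsionFree α]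
    {A S : Matrix n n α} (hA : A.IsSymm) (hS : Sᵀ = -S) : (A * S).trace = 0 := by
  refine self_eq_neg.mp ?_
  conv_lhs => rw [← trace_transpose, transpose_mul, hS, hA.eq, Matrix.neg_mul, trace_neg,
    trace_mul_comm]

section StabilizedFlow

variable {n α : Type*} [Fintype n] [DecidableEq n] [CommRing α]

def gramDefect (A : Matrix n n α) : Matrix n n α := Aᵀ * A - 1

theorem isSymm_gramDefect (A : Matrix n n α) : (gramDefect A).IsSymm :=
  (isSymm_transpose_mul_self A).sub isSymm_one

def stabilizedField (k : α) (S A : Matrix n n α) : Matrix n n α := A * S - k • (A * gramDefect A)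

theorem trace_gramDefect_mul_deriv_gram [IsAddTorsionFree α] (k : α) {S : Matrix n n α}
    (hS : Sᵀ = -S) (A : Matrix n n α) :
    ((gramDefect A)ᵀ * ((stabilizedField k S A)ᵀ * A + Aᵀ * stabilizedField k S A)).trace =
      -2 * k * ((gramDefect A * gramDefect A * gramDefect A).trace +
        (gramDefect A * gramDefect A).trace) := by
  set E := gramDefect A
  have hE : E.IsSymm := isSymm_gramDefect A
  have hsymm : ∀ X : Matrix n n α, (E * (Xᵀ + X)).trace = 2 * (E * X).trace := by
    intro X
    rw [Matrix.mul_add, trace_add, ← trace_transpose (E * Xᵀ), transpose_mul, transpose_transpose,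
      hE.eq, trace_mul_comm X]
    ring
  have hAF : Aᵀ * stabilizedField k S A = E * S + S - k • (E * E) - k • E := by
    have hAA : Aᵀ * A = E + 1 := (sub_add_cancel _ _).symm
    simp only [stabilizedField, Matrix.mul_sub, Matrix.mul_smul, ← Matrix.mul_assoc, hAA,
      Matrix.add_mul, Matrix.one_mul, smul_add]
    abel
  have hFA : (stabilizedField k S A)ᵀ * A = (Aᵀ * stabilizedField k S A)ᵀ := by
    rw [transpose_mul, transpose_transpose]
  have hEES : (E * (E * S)).trace = 0 := by
    rw [← Matrix.mul_assoc, ← sq]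
    exact (hE.pow 2).trace_mul_eq_zero hS
  rw [hE.eq, hFA, hsymm, hAF, Matrix.mul_sub, Matrix.mul_sub, Matrix.mul_add, trace_sub, trace_sub,
    trace_add, hEES, hE.trace_mul_eq_zero hS, Matrix.mul_smul, Matrix.mul_smul, trace_smul,
    trace_smul, Matrix.mul_assoc, smul_eq_mul, smul_eq_mul]
  ring

end StabilizedFlow

section Calculus

variable {t : ℝ}

theorem HasDerivAt.matrix_transpose {m n : Type*} [Fintype m] [Fintype n]
    {A : ℝ → Matrix m n ℝ} {A' : Matrix m n ℝ} (h : HasDerivAt A A' t) :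
    HasDerivAt (fun s => (A s)ᵀ) A'ᵀ t :=
  (LinearMap.toContinuousLinearMap (transposeLinearEquiv m n ℝ ℝ).toLinearMap).hasFDerivAt
    |>.comp_hasDerivAt t h

theorem HasDerivAt.matrix_trace {n : Type*} [Fintype n] {A : ℝ → Matrix n n ℝ}
    {A' : Matrix n n ℝ} (h : HasDerivAt A A' t) :
    HasDerivAt (fun s => (A s).trace) A'.trace t :=
  (LinearMap.toContinuousLinearMap (traceLinearMap n ℝ ℝ)).hasFDerivAt.comp_hasDerivAt t h

variable {n : Type*} [Fintype n] [DecidableEq n] {A : ℝ → Matrix n n ℝ} {A' : Matrix n n ℝ}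

attribute [local instance] Matrix.frobeniusNormedRing Matrix.frobeniusNormedAlgebra

theorem HasDerivAt.frobenius_norm_sq (h : HasDerivAt A A' t) :
    HasDerivAt (fun s => ‖A s‖ ^ 2) (2 * ((A t)ᵀ * A').trace) t := by
  simp_rw [frobenius_norm_sq_eq_trace]
  convert (h.matrix_transpose.fun_mul h).matrix_trace using 1
  rw [trace_add, ← trace_transpose (A'ᵀ * A t), transpose_mul, transpose_transpose]
  ring

theorem hasDerivAt_gramDefect (h : HasDerivAt A A' t) :
    HasDerivAt (fun s => gramDefect (A s)) (A'ᵀ * A t + (A t)ᵀ * A') t :=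
  (h.matrix_transpose.fun_mul h).sub_const 1

theorem hasDerivAt_norm_sq_gramDefect {k : ℝ} {S : Matrix n n ℝ}
    (hS : Sᵀ = -S) (h : HasDerivAt A (stabilizedField k S (A t)) t) :
    HasDerivAt (fun s => ‖gramDefect (A s)‖ ^ 2)
      (-4 * k * ((gramDefect (A t) * gramDefect (A t) * gramDefect (A t)).trace +
        ‖gramDefect (A t)‖ ^ 2)) t := by
  convert (hasDerivAt_gramDefect h).frobenius_norm_sq using 1
  rw [trace_gramDefect_mul_deriv_gram k hS, frobenius_norm_sq_eq_trace, (isSymm_gramDefect _).eq]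
  ring

end Calculus

theorem hat_transpose (v : Fin 3 → ℝ) : (hat v)ᵀ = -hat v := by
  ext i j
  fin_cases i <;> fin_cases j <;> simp [hat]

/-- Theorem 2: for the transversally stabilized rigid body attitude dynamics
`Ṙ = RΩ̂ − k_e R(RᵀR − I)`, the sublevel set `{Ṽ < r}` of
`Ṽ(R) = (k_e/4)‖RᵀR − I‖²` is positively invariant (for suitable `r > 0`) and
trajectories converge exponentially to `{R : RᵀR = I}`. -/
theorem SO3_exponentially_attractive (ke : ℝ) (hke : 0 < ke) :
    ∃ r > (0:ℝ), ∃ b > (0:ℝ),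
      ∀ (R : ℝ → Mat3) (Ω : ℝ → Fin 3 → ℝ),
        (∀ t, 0 ≤ t → HasDerivAt R
          (R t * hat (Ω t) - ke • (R t * ((R t)ᵀ * R t - 1))) t) →
        ke / 4 * ‖(R 0)ᵀ * R 0 - 1‖ ^ 2 < r →
        ∀ t, 0 ≤ t →
          ke / 4 * ‖(R t)ᵀ * R t - 1‖ ^ 2 < r ∧
          ‖(R t)ᵀ * R t - 1‖ ≤ ‖(R 0)ᵀ * R 0 - 1‖ * Real.exp (-(b / 2) * t) := by
  refine ⟨ke / 64, by positivity, 2 * ke, by positivity, fun R Ω hR h0 t ht => ?_⟩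
  show ke / 4 * ‖gramDefect (R t)‖ ^ 2 < ke / 64 ∧
    ‖gramDefect (R t)‖ ≤ ‖gramDefect (R 0)‖ * Real.exp (-(2 * ke / 2) * t)
  have hV : ∀ s, 0 ≤ s → HasDerivAt (fun s => ‖gramDefect (R s)‖ ^ 2) _ s := fun s hs =>
    hasDerivAt_norm_sq_gramDefect (hat_transpose (Ω s)) (hR s hs)
  change ke / 4 * ‖gramDefect (R 0)‖ ^ 2 < ke / 64 at h0
  have hV0 : ‖gramDefect (R 0)‖ ^ 2 < 1 / 16 := by nlinarith
  have hinv := forall_lt_of_hasDerivAt_le_neg_mul (by positivity) hV (sq_nonneg _) hV0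
    fun s _ hs => neg_mul_trace_pow_three_add_le hke.le hs
  have hdecay := le_mul_exp_of_hasDerivAt_le_neg_mul_s7 hV
    fun s hs => neg_mul_trace_pow_three_add_le hke.le (hinv s hs)
  refine ⟨by nlinarith [hinv t ht], ?_⟩
  rw [← pow_le_pow_iff_left₀ (norm_nonneg _) (by positivity) two_ne_zero, mul_pow,
    ← Real.exp_nat_mul]
  refine (hdecay t ht).trans_eq ?_
  congr 2
  push_cast
  ring

end
end

section
/- Let k_e > 0 and let A : [0,∞) → ℝ^{3×3} be a curve of skew-symmetric matrices. If Z : [0,∞) → ℝ^{3×3} is a differentiable curve of symmetric matrices satisfying Ż(t) = [Z(t), A(t)] − 2k_e·Z(t) for all t ≥ 0, then ‖Z(t)‖ ≤ e^{−2k_e t}·‖Z(0)‖ for all t ≥ 0. -/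
open Matrix

attribute [local instance] Matrix.frobeniusNormedAddCommGroup Matrix.frobeniusNormedSpace

noncomputable section

/-! `V = ‖Z‖²` satisfies `V' = 2 tr (Zᵀ Ż) = -4 k_e V`, because `tr (Z (Z A - A Z)) = 0` by
cyclicity of the trace. Hence `e^{4 k_e t} V` is constant and the bound holds with equality. -/

namespace Matrix

variable {m n : Type*} [Fintype m] [Fintype n]

theorem frobenius_norm_sq_eq_trace (M : Matrix m n ℝ) : ‖M‖ ^ 2 = (Mᵀ * M).trace := by
  rw [frobenius_norm_def, ← Real.sqrt_eq_rpow, Real.sq_sqrt (by positivity), Finset.sum_comm]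
  simp [trace, mul_apply, ← sq]

theorem _root_.HasDerivAt.matrix_apply {Z : ℝ → Matrix m n ℝ} {Z' : Matrix m n ℝ} {t : ℝ}
    (hZ : HasDerivAt Z Z' t) (i : m) (j : n) : HasDerivAt (fun s => Z s i j) (Z' i j) t :=
  (entryLinearMap ℝ ℝ i j).toContinuousLinearMap.hasFDerivAt.comp_hasDerivAt t hZ

theorem _root_.HasDerivAt.frobenius_norm_sq_s10 {Z : ℝ → Matrix m n ℝ} {Z' : Matrix m n ℝ} {t : ℝ}
    (hZ : HasDerivAt Z Z' t) : HasDerivAt (fun s => ‖Z s‖ ^ 2) (2 * ((Z t)ᵀ * Z').trace) t := by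
  simp only [frobenius_norm_sq_eq_trace, trace, diag, mul_apply, transpose_apply, Finset.mul_sum]
  refine HasDerivAt.fun_sum fun j _ => HasDerivAt.fun_sum fun i _ => ?_
  exact ((hZ.matrix_apply i j).fun_mul (hZ.matrix_apply i j)).congr_deriv (by ring)

theorem trace_mul_commutator_self {R : Type*} [CommRing R]
    (Z A : Matrix n n R) : (Z * (Z * A - A * Z)).trace = 0 := by
  rw [mul_sub, trace_sub, trace_mul_cycle' Z A Z, sub_self]

end Matrix

theorem eq_exp_mul_of_hasDerivAt_mul_self {f : ℝ → ℝ} {c : ℝ}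
    (hf : ∀ t, 0 ≤ t → HasDerivAt f (c * f t) t) {t : ℝ} (ht : 0 ≤ t) :
    f t = Real.exp (c * t) * f 0 := by
  have hg : ∀ s, 0 ≤ s → HasDerivAt (fun u => Real.exp (-c * u) * f u) 0 s := fun s hs =>
    (((hasDerivAt_id s).const_mul (-c)).exp.mul (hf s hs)).congr_deriv (by ring)
  have hconst := constant_of_has_deriv_right_zero
    (fun s hs => (hg s hs.1).continuousAt.continuousWithinAt)
    (fun s hs => (hg s hs.1).hasDerivWithinAt) t ⟨ht, le_rfl⟩
  rw [mul_zero, Real.exp_zero, one_mul] at hconst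
  rw [← hconst, ← mul_assoc, ← Real.exp_add]
  simp

theorem symmetric_part_exp_decay_general (ke : ℝ)
    (A : ℝ → Mat3)
    (Z : ℝ → Mat3) (hZsym : ∀ t, 0 ≤ t → (Z t)ᵀ = Z t)
    (hZ : ∀ t, 0 ≤ t → HasDerivAt Z (mcomm (Z t) (A t) - (2 * ke) • Z t) t) :
    ∀ t, 0 ≤ t → ‖Z t‖ ≤ Real.exp (-(2 * ke) * t) * ‖Z 0‖ := by
  intro t ht
  have hV : ∀ s, 0 ≤ s → HasDerivAt (fun u => ‖Z u‖ ^ 2) (-(4 * ke) * ‖Z s‖ ^ 2) s := by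
    intro s hs
    refine (hZ s hs).frobenius_norm_sq_s10.congr_deriv ?_
    rw [Matrix.mul_sub, trace_sub, Matrix.mul_smul, trace_smul, Matrix.frobenius_norm_sq_eq_trace,
      hZsym s hs, mcomm, Matrix.trace_mul_commutator_self, smul_eq_mul]
    ring
  have hsq : ‖Z t‖ ^ 2 = (Real.exp (-(2 * ke) * t) * ‖Z 0‖) ^ 2 := by
    rw [eq_exp_mul_of_hasDerivAt_mul_self hV ht, mul_pow, ← Real.exp_nat_mul]
    ring_nf
  exact ((pow_left_inj₀ (norm_nonneg _) (by positivity) two_ne_zero).mp hsq).le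

/-- Exponential decay of the symmetric part: if `Z` is symmetric-valued and
`Ż = [Z, A] − 2k_e Z` with `A` skew-symmetric-valued, then
`‖Z(t)‖ ≤ e^{−2k_e t}‖Z(0)‖`. -/
theorem symmetric_part_exp_decay (ke : ℝ) (hke : 0 < ke)
    (A : ℝ → Mat3) (hA : ∀ t, 0 ≤ t → (A t)ᵀ = -(A t))
    (Z : ℝ → Mat3) (hZsym : ∀ t, 0 ≤ t → (Z t)ᵀ = Z t)
    (hZ : ∀ t, 0 ≤ t → HasDerivAt Z (mcomm (Z t) (A t) - (2 * ke) • Z t) t) :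
    ∀ t, 0 ≤ t → ‖Z t‖ ≤ Real.exp (-(2 * ke) * t) * ‖Z 0‖ :=
  symmetric_part_exp_decay_general ke A Z hZsym hZ

end
end

section
/- Let k_e > 0 and let Ω₀ : [0,∞) → ℝ³ be differentiable and bounded, with u₀ = Ω̇₀. Let K_P, K_D ∈ ℝ^{3×3} be such that the 6×6 block matrix [[0, I],[−K_P, −K_D]] is Hurwitz. Then there exist constants C > 0 and λ > 0 such that every solution (Z_s, z, ω) : [0,∞) → Sym(ℝ^{3×3}) × ℝ³ × ℝ³ of the closed-loop system Ż_s = [Z_s, Ω̂₀(t)] − 2k_e Z_s, ż = z × Ω₀(t) + ω, ω̇ = −K_P z − K_D (z × Ω₀(t) + ω) − (z × Ω₀(t) + ω) × Ω₀(t) − z × u₀(t), satisfies ‖Z_s(t)‖ + ‖z(t)‖ + ‖ω(t)‖ ≤ C·e^{−λt}·(‖Z_s(0)‖ + ‖z(0)‖ + ‖ω(0)‖) for all t ≥ 0. -/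
open Matrix

attribute [local instance] Matrix.frobeniusNormedAddCommGroup Matrix.frobeniusNormedSpace

noncomputable section

/-- A real square matrix is Hurwitz if every complex eigenvalue (root of its
characteristic polynomial over ℂ) has negative real part. -/
def IsHurwitzMat {n : Type*} [Fintype n] [DecidableEq n] (M : Matrix n n ℝ) : Prop :=
  ∀ μ : ℂ, (M.map (algebraMap ℝ ℂ)).charpoly.eval μ = 0 → μ.re < 0

/-- A real polynomial is Hurwitz if all of its complex roots have negative real part. -/
def IsHurwitzPoly (p : Polynomial ℝ) : Prop :=
  ∀ μ : ℂ, (p.map (algebraMap ℝ ℂ)).eval μ = 0 → μ.re < 0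

/-!
The attitude part decouples: `Z_s` is symmetric, so `⟨Z_s, [Z_s, Ω̂₀]⟩ = 0` by cyclicity of the
trace and `‖Z_s‖` decays exactly like `e^{-2 k_e t}`. For the rate part, the variables
`(z, ż) = (z, z × Ω₀ + ω)` satisfy the time-invariant system `x' = A x` with
`A = [[0, I], [-K_P, -K_D]]`. Complexifying and factoring the characteristic polynomial
`χ_A = ∏ (X - μ)`, Cayley–Hamilton lets one peel off one root at a time: if `y' = T y`, then
`w = (T - μ) y` solves the same equation and is annihilated by the remaining factors, and
by variation of constants in `y' = μ y + w` the decay rate `γ` of `w` passes to `y` as long as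
`γ < -Re μ`.
-/

section Hurwitz

open Polynomial

theorem norm_le_of_hasDerivAt_eq_smul_add {E : Type*} [NormedAddCommGroup E] [NormedSpace ℂ E]
    {μ : ℂ} {γ B : ℝ} (hμ : μ.re < -γ) {y f : ℝ → E}
    (hy : ∀ t, 0 ≤ t → HasDerivAt y (μ • y t + f t) t)
    (hf : ∀ t, 0 ≤ t → ‖f t‖ ≤ B * Real.exp (-γ * t)) {t : ℝ} (ht : 0 ≤ t) :
    ‖y t‖ ≤ (‖y 0‖ + B / (-μ.re - γ)) * Real.exp (-γ * t) := by
  set κ := -μ.re - γ with hκ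
  have hκpos : 0 < κ := by linarith
  have hB : 0 ≤ B := by simpa using (norm_nonneg _).trans (hf 0 le_rfl)
  set g : ℝ → E := fun s => Complex.exp (-(μ * s)) • y s
  have hg : ∀ s : ℝ, 0 ≤ s → HasDerivAt g (Complex.exp (-(μ * s)) • f s) s := by
    intro s hs
    have hexp : HasDerivAt (fun s : ℝ => Complex.exp (-(μ * s)))
        (Complex.exp (-(μ * (s : ℂ))) * -μ) s :=
      (((Complex.ofRealCLM.hasDerivAt).const_mul μ).neg.congr_deriv (by simp)).cexp
    refine (hexp.smul (hy s hs)).congr_deriv ?_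
    module
  -- `‖g'(s)‖ ≤ B e^{κ s}`, so `g` stays below the solution of `b' = κ b` with `b 0 = ‖y 0‖ + B / κ`.
  have hbound : ‖g t‖ ≤ (‖y 0‖ + B / κ) * Real.exp (κ * t) := by
    refine image_norm_le_of_norm_deriv_right_le_deriv_boundary (a := 0)
      (B := fun s => (‖y 0‖ + B / κ) * Real.exp (κ * s))
      (B' := fun s => (κ * ‖y 0‖ + B) * Real.exp (κ * s))
      (fun s hs => (hg s hs.1).continuousAt.continuousWithinAt)
      (fun s hs => (hg s hs.1).hasDerivWithinAt)
      (by simpa [g] using div_nonneg hB hκpos.le) (fun s => ?_) (fun s hs => ?_) ⟨ht, le_rfl⟩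
    · refine (((hasDerivAt_id s).const_mul κ).exp.const_mul _).congr_deriv ?_
      simp only [id]
      field_simp
    · rw [norm_smul, Complex.norm_exp]
      calc Real.exp (-(μ * s)).re * ‖f s‖ ≤ Real.exp (-μ.re * s) * (B * Real.exp (-γ * s)) := by
            simpa using mul_le_mul_of_nonneg_left (hf s hs.1) (Real.exp_nonneg _)
        _ = B * Real.exp (κ * s) := by rw [mul_left_comm, ← Real.exp_add, hκ]; ring_nf
        _ ≤ (κ * ‖y 0‖ + B) * Real.exp (κ * s) := by gcongr; nlinarith [norm_nonneg (y 0)]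
  have hyg : y t = Complex.exp (μ * t) • g t := by
    simp [g, smul_smul, ← Complex.exp_add]
  calc ‖y t‖ = Real.exp (μ.re * t) * ‖g t‖ := by simp [hyg, norm_smul, Complex.norm_exp]
    _ ≤ Real.exp (μ.re * t) * ((‖y 0‖ + B / κ) * Real.exp (κ * t)) := by gcongr
    _ = (‖y 0‖ + B / κ) * Real.exp (-γ * t) := by
        rw [mul_left_comm, ← Real.exp_add, hκ]; ring_nf

theorem exists_norm_le_of_aeval_prod_X_sub_C {E : Type*} [NormedAddCommGroup E]
    [NormedSpace ℂ E] (T : E →L[ℂ] E) {γ : ℝ} (s : Multiset ℂ) (hs : ∀ μ ∈ s, μ.re < -γ) :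
    ∃ K, 0 ≤ K ∧ ∀ y : ℝ → E, (∀ t, 0 ≤ t → HasDerivAt y (T (y t)) t) →
      (∀ t, 0 ≤ t → aeval T (s.map fun μ => X - C μ).prod (y t) = 0) →
      ∀ t, 0 ≤ t → ‖y t‖ ≤ K * Real.exp (-γ * t) * ‖y 0‖ := by
  induction s using Multiset.induction_on with
  | empty =>
    exact ⟨0, le_rfl, fun y _ hy t ht => by simp_all⟩
  | cons μ s ih =>
    obtain ⟨K, hK, hdecay⟩ := ih fun ν hν => hs ν (Multiset.mem_cons_of_mem hν)
    have hμ : μ.re < -γ := hs μ (Multiset.mem_cons_self μ s)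
    have hκ : 0 < -μ.re - γ := by linarith
    set L : E →L[ℂ] E := T - μ • 1
    refine ⟨1 + K * ‖L‖ / (-μ.re - γ), by positivity, fun y hy hann t ht => ?_⟩
    have hLT : ∀ v, L (T v) = T (L v) := fun v => by simp [L]
    have hw : ∀ t, 0 ≤ t → HasDerivAt (fun s => L (y s)) (T (L (y t))) t := fun t ht =>
      hLT (y t) ▸ (L.restrictScalars ℝ).hasFDerivAt.comp_hasDerivAt t (hy t ht)
    have hwann : ∀ t, 0 ≤ t → aeval T (s.map fun μ => X - C μ).prod (L (y t)) = 0 := by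
      intro t ht
      have hL : L = aeval T (X - C μ) := by simp [L, Algebra.algebraMap_eq_smul_one]
      have h := hann t ht
      rw [Multiset.map_cons, Multiset.prod_cons, mul_comm, map_mul] at h
      rwa [hL]
    have hwt : ∀ t, 0 ≤ t → ‖L (y t)‖ ≤ K * ‖L‖ * ‖y 0‖ * Real.exp (-γ * t) := fun t ht =>
      calc ‖L (y t)‖ ≤ K * Real.exp (-γ * t) * ‖L (y 0)‖ := hdecay _ hw hwann t ht
        _ ≤ K * Real.exp (-γ * t) * (‖L‖ * ‖y 0‖) := by gcongr; exact L.le_opNorm _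
        _ = K * ‖L‖ * ‖y 0‖ * Real.exp (-γ * t) := by ring
    have hy' : ∀ t, 0 ≤ t → HasDerivAt y (μ • y t + L (y t)) t := fun t ht => by
      simpa [L] using hy t ht
    calc ‖y t‖ ≤ (‖y 0‖ + K * ‖L‖ * ‖y 0‖ / (-μ.re - γ)) * Real.exp (-γ * t) :=
          norm_le_of_hasDerivAt_eq_smul_add hμ hy' hwt ht
      _ = (1 + K * ‖L‖ / (-μ.re - γ)) * Real.exp (-γ * t) * ‖y 0‖ := by ring

open Filter Topology in
theorem Finset.exists_pos_forall_re_lt_neg (s : Finset ℂ) (hs : ∀ μ ∈ s, μ.re < 0) :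
    ∃ γ > 0, ∀ μ ∈ s, μ.re < -γ := by
  have h : ∀ᶠ γ in 𝓝[>] (0 : ℝ), ∀ μ ∈ s, μ.re < -γ :=
    s.eventually_all.2 fun μ hμ => nhdsWithin_le_nhds <|
      (continuous_neg.tendsto' (0 : ℝ) 0 neg_zero).eventually_const_lt (hs μ hμ)
  exact (h.and self_mem_nhdsWithin).exists.imp fun γ h => ⟨h.2, h.1⟩

theorem norm_pi_ofReal {ι : Type*} [Fintype ι] (v : ι → ℝ) : ‖fun i => (v i : ℂ)‖ = ‖v‖ := by
  simp [Pi.norm_def, Complex.nnnorm_real]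

theorem IsHurwitzMat.exists_norm_le_mul_exp {ι : Type*} [Fintype ι] [DecidableEq ι]
    {A : Matrix ι ι ℝ} (hA : IsHurwitzMat A) :
    ∃ K > 0, ∃ γ > 0, ∀ x : ℝ → ι → ℝ, (∀ t, 0 ≤ t → HasDerivAt x (A *ᵥ x t) t) →
      ∀ t, 0 ≤ t → ‖x t‖ ≤ K * Real.exp (-γ * t) * ‖x 0‖ := by
  set χ := (A.map (algebraMap ℝ ℂ)).charpoly
  obtain ⟨γ, hγ, hroots⟩ := χ.roots.toFinset.exists_pos_forall_re_lt_neg fun μ hμ =>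
    hA μ (isRoot_of_mem_roots (Multiset.mem_toFinset.1 hμ))
  set T : (ι → ℂ) →L[ℂ] (ι → ℂ) :=
    Module.End.toContinuousLinearMap _ (Matrix.toLinAlgEquiv' (A.map (algebraMap ℝ ℂ)))
  have hχ : (χ.roots.map fun μ => X - C μ).prod = χ :=
    prod_multiset_X_sub_C_of_monic_of_roots_card_eq (Matrix.charpoly_monic _)
      IsAlgClosed.card_roots_eq_natDegree
  have hTχ : aeval T χ = 0 := by
    simp only [T, χ, aeval_algEquiv, AlgHom.comp_apply, Matrix.aeval_self_charpoly, map_zero]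
  obtain ⟨K, hK, hdecay⟩ := exists_norm_le_of_aeval_prod_X_sub_C T χ.roots
    fun μ hμ => hroots μ (Multiset.mem_toFinset.2 hμ)
  refine ⟨K + 1, by positivity, γ, hγ, fun x hx t ht => ?_⟩
  have hy : ∀ t, 0 ≤ t → HasDerivAt (fun s i => (x s i : ℂ)) (T fun i => (x t i : ℂ)) t := by
    intro t ht
    refine hasDerivAt_pi.2 fun i => ?_
    refine ((hasDerivAt_pi.1 (hx t ht)) i).ofReal_comp.congr_deriv ?_
    exact RingHom.map_mulVec (algebraMap ℝ ℂ) A (x t) i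
  have hxt := hdecay _ hy (fun t _ => by rw [hχ, hTχ]; rfl) t ht
  simp only [norm_pi_ofReal] at hxt
  calc ‖x t‖ ≤ K * Real.exp (-γ * t) * ‖x 0‖ := hxt
    _ ≤ (K + 1) * Real.exp (-γ * t) * ‖x 0‖ := by gcongr; linarith

end Hurwitz

theorem Matrix.trace_mul_commutator_self_s11 {n : Type*} [Fintype n] (S B : Matrix n n ℝ) :
    (S * (S * B - B * S)).trace = 0 := by
  rw [Matrix.mul_sub, Matrix.trace_sub, ← Matrix.mul_assoc, Matrix.trace_mul_comm (S * S),
    Matrix.trace_mul_comm S, Matrix.mul_assoc, sub_self]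

theorem eq_exp_mul_of_hasDerivAt {c : ℝ} {q : ℝ → ℝ} (hq : ∀ t, 0 ≤ t → HasDerivAt q (c * q t) t)
    {t : ℝ} (ht : 0 ≤ t) : q t = Real.exp (c * t) * q 0 := by
  have hderiv : ∀ s, 0 ≤ s → HasDerivAt (fun s => Real.exp (-c * s) * q s) 0 s := fun s hs => by
    refine (((hasDerivAt_id s).const_mul (-c)).exp.mul (hq s hs)).congr_deriv ?_
    simp only [id]
    ring
  have hconst := constant_of_has_deriv_right_zero
    (fun s hs => (hderiv s hs.1).continuousAt.continuousWithinAt)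
    (fun s hs => (hderiv s hs.1).hasDerivWithinAt) t ⟨ht, le_rfl⟩
  simp only [mul_zero, Real.exp_zero, one_mul] at hconst
  rw [← hconst, ← mul_assoc, ← Real.exp_add]
  simp

theorem Matrix.frobenius_norm_eq_sqrt {m n : Type*} [Fintype m] [Fintype n] (A : Matrix m n ℝ) :
    ‖A‖ = √(∑ i, ∑ j, A i j ^ 2) := by
  simp [Matrix.frobenius_norm_def, Real.sqrt_eq_rpow]

theorem Matrix.frobenius_norm_eq_exp_of_hasDerivAt {n : Type*} [Fintype n] {k : ℝ}
    {B Z : ℝ → Matrix n n ℝ} (hsym : ∀ t, 0 ≤ t → (Z t)ᵀ = Z t)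
    (hZ : ∀ t, 0 ≤ t → HasDerivAt Z (Z t * B t - B t * Z t - k • Z t) t) {t : ℝ} (ht : 0 ≤ t) :
    ‖Z t‖ = Real.exp (-k * t) * ‖Z 0‖ := by
  set q : ℝ → ℝ := fun s => ∑ i, ∑ j, Z s i j ^ 2
  have hq : ∀ s, 0 ≤ s → HasDerivAt q (-(2 * k) * q s) s := by
    intro s hs
    have hentry : ∀ i j, HasDerivAt (fun s => Z s i j) ((Z s * B s - B s * Z s - k • Z s) i j) s :=
      fun i j => (LinearMap.toContinuousLinearMap
        (Matrix.entryLinearMap ℝ ℝ i j)).hasFDerivAt.comp_hasDerivAt s (hZ s hs)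
    refine (HasDerivAt.fun_sum fun i _ => HasDerivAt.fun_sum fun j _ =>
      (hentry i j).fun_pow 2).congr_deriv ?_
    have htrace := Matrix.trace_mul_commutator_self_s11 (Z s) (B s)
    nth_rewrite 1 [← hsym s hs] at htrace
    simp only [Matrix.trace, Matrix.diag, Matrix.mul_apply, Matrix.transpose_apply] at htrace
    rw [Finset.sum_comm] at htrace
    calc _ = 2 * ∑ i, ∑ j, Z s i j * (Z s * B s - B s * Z s) i j + -(2 * k) * q s := by
          simp only [q, Finset.mul_sum, ← Finset.sum_add_distrib]
          refine Finset.sum_congr rfl fun i _ => Finset.sum_congr rfl fun j _ => ?_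
          simp only [Matrix.sub_apply, Matrix.smul_apply, smul_eq_mul]
          ring
      _ = -(2 * k) * q s := by rw [htrace]; ring
  rw [Matrix.frobenius_norm_eq_sqrt, Matrix.frobenius_norm_eq_sqrt]
  change √(q t) = _ * √(q 0)
  rw [eq_exp_mul_of_hasDerivAt hq ht, Real.sqrt_mul (Real.exp_nonneg _), ← Real.exp_half]
  ring_nf

theorem HasDerivAt.cross {u v : ℝ → Fin 3 → ℝ} {u' v' : Fin 3 → ℝ} {t : ℝ}
    (hu : HasDerivAt u u' t) (hv : HasDerivAt v v' t) :
    HasDerivAt (fun s => cross (u s) (v s)) (cross u' (v t) + cross (u t) v') t := by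
  rw [hasDerivAt_pi] at hu hv ⊢
  intro i
  fin_cases i <;> refine (((hu _).mul (hv _)).sub ((hu _).mul (hv _))).congr_deriv ?_ <;>
    simp only [_root_.cross, Pi.add_apply, Fin.isValue, Fin.zero_eta, Fin.mk_one, Fin.reduceFinMk,
      cons_val_zero, cons_val_one, cons_val] <;> ring

theorem hasDerivAt_sumElim_of_closedLoop {KP KD : Mat3} {Ω₀ u₀ z ω : ℝ → Fin 3 → ℝ} {t : ℝ}
    (hΩ₀ : HasDerivAt Ω₀ (u₀ t) t) (hz : HasDerivAt z (cross (z t) (Ω₀ t) + ω t) t)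
    (hω : HasDerivAt ω (-(KP *ᵥ z t) - KD *ᵥ (cross (z t) (Ω₀ t) + ω t)
      - cross (cross (z t) (Ω₀ t) + ω t) (Ω₀ t) - cross (z t) (u₀ t)) t) :
    HasDerivAt (fun s => Sum.elim (z s) (cross (z s) (Ω₀ s) + ω s))
      (fromBlocks 0 1 (-KP) (-KD) *ᵥ Sum.elim (z t) (cross (z t) (Ω₀ t) + ω t)) t := by
  have hv := (hz.cross hΩ₀).add hω
  rw [fromBlocks_mulVec]
  refine hasDerivAt_pi.2 ?_
  rintro (i | i)
  · simpa using hasDerivAt_pi.1 hz i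
  · refine (hasDerivAt_pi.1 hv i).congr_deriv ?_
    simp only [Pi.add_apply, Pi.sub_apply, Pi.neg_apply, Sum.elim_inr, Sum.elim_comp_inr,
      Sum.elim_comp_inl, zero_mulVec, one_mulVec, zero_add, neg_mulVec]
    ring

theorem norm_le_enorm3 (v : Fin 3 → ℝ) : ‖v‖ ≤ enorm3 v :=
  (pi_norm_le_iff_of_nonneg (Real.sqrt_nonneg _)).2 fun i => Real.abs_le_sqrt <|
    Finset.single_le_sum (f := fun i => v i ^ 2) (fun _ _ => sq_nonneg _) (Finset.mem_univ i)

theorem enorm3_le_two_mul_norm (v : Fin 3 → ℝ) : enorm3 v ≤ 2 * ‖v‖ := by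
  have hv : ∀ i, v i ^ 2 ≤ ‖v‖ ^ 2 := fun i => by
    simpa using pow_le_pow_left₀ (abs_nonneg _) (norm_le_pi_norm v i) 2
  calc enorm3 v ≤ √((2 * ‖v‖) ^ 2) :=
        Real.sqrt_le_sqrt (by simp only [Fin.sum_univ_three]; nlinarith [hv 0, hv 1, hv 2])
    _ = 2 * ‖v‖ := Real.sqrt_sq (by positivity)

theorem norm_cross_le (u v : Fin 3 → ℝ) : ‖cross u v‖ ≤ 2 * ‖u‖ * ‖v‖ := by
  refine (pi_norm_le_iff_of_nonneg (by positivity)).2 fun i => ?_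
  have hu := norm_le_pi_norm u
  have hv := norm_le_pi_norm v
  have key : ∀ a b c d : Fin 3, ‖u a * v b - u c * v d‖ ≤ 2 * ‖u‖ * ‖v‖ := fun a b c d =>
    calc _ ≤ ‖u a‖ * ‖v b‖ + ‖u c‖ * ‖v d‖ := by
          simpa only [norm_mul] using norm_sub_le (u a * v b) (u c * v d)
      _ ≤ ‖u‖ * ‖v‖ + ‖u‖ * ‖v‖ := by gcongr <;> simp_all
      _ = 2 * ‖u‖ * ‖v‖ := by ring
  fin_cases i <;> exact key _ _ _ _

theorem norm_sumElim {α β : Type*} [Fintype α] [Fintype β] (a : α → ℝ) (b : β → ℝ) :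
    ‖Sum.elim a b‖ = max ‖a‖ ‖b‖ := by
  simp [← Finset.univ_disjSum_univ, Finset.sup_disjSum, Pi.norm_def]

theorem enorm3_add_enorm3_le_norm_sumElim {z ω Ω : Fin 3 → ℝ} {M : ℝ} (hΩ : ‖Ω‖ ≤ M) :
    enorm3 z + enorm3 ω ≤ 4 * (1 + M) * ‖Sum.elim z (cross z Ω + ω)‖ := by
  set x := ‖Sum.elim z (cross z Ω + ω)‖
  have hz : ‖z‖ ≤ x := by simp [x, norm_sumElim]
  have hv : ‖cross z Ω + ω‖ ≤ x := by simp [x, norm_sumElim]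
  have hω : ‖ω‖ ≤ (1 + 2 * M) * x :=
    calc ‖ω‖ ≤ ‖cross z Ω + ω‖ + ‖cross z Ω‖ := by
          simpa using norm_sub_le (cross z Ω + ω) (cross z Ω)
      _ ≤ x + 2 * x * M := by gcongr; exact (norm_cross_le z Ω).trans (by gcongr)
      _ = (1 + 2 * M) * x := by ring
  linarith [enorm3_le_two_mul_norm z, enorm3_le_two_mul_norm ω]

theorem norm_sumElim_le {z ω Ω : Fin 3 → ℝ} {M : ℝ} (hΩ : ‖Ω‖ ≤ M) :
    ‖Sum.elim z (cross z Ω + ω)‖ ≤ (1 + 2 * M) * (enorm3 z + enorm3 ω) := by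
  have hz := norm_le_enorm3 z
  have hω := norm_le_enorm3 ω
  have hM : 0 ≤ M := (norm_nonneg _).trans hΩ
  have hcross : ‖cross z Ω‖ ≤ 2 * M * enorm3 z := by
    nlinarith [norm_cross_le z Ω, norm_nonneg z, norm_nonneg Ω]
  have hez := (norm_nonneg z).trans hz
  have heω := (norm_nonneg ω).trans hω
  rw [norm_sumElim, max_le_iff]
  constructor
  · nlinarith [mul_nonneg hM hez, mul_nonneg hM heω]
  · nlinarith [norm_add_le (cross z Ω) ω, mul_nonneg hM heω]

theorem exists_enorm3_le_of_closedLoop {Ω₀ u₀ : ℝ → Fin 3 → ℝ}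
    (hΩ₀diff : ∀ t, 0 ≤ t → HasDerivAt Ω₀ (u₀ t) t) {M : ℝ}
    (hΩ₀ : ∀ t, 0 ≤ t → ‖Ω₀ t‖ ≤ M) {KP KD : Mat3}
    (hHur : IsHurwitzMat (fromBlocks (0 : Mat3) (1 : Mat3) (-KP) (-KD))) :
    ∃ C > 0, ∃ γ > 0, ∀ z ω : ℝ → Fin 3 → ℝ,
      (∀ t, 0 ≤ t → HasDerivAt z (cross (z t) (Ω₀ t) + ω t) t) →
      (∀ t, 0 ≤ t → HasDerivAt ω (-(KP *ᵥ z t) - KD *ᵥ (cross (z t) (Ω₀ t) + ω t)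
        - cross (cross (z t) (Ω₀ t) + ω t) (Ω₀ t) - cross (z t) (u₀ t)) t) →
      ∀ t, 0 ≤ t → enorm3 (z t) + enorm3 (ω t) ≤
        C * Real.exp (-γ * t) * (enorm3 (z 0) + enorm3 (ω 0)) := by
  have hM : 0 ≤ M := (norm_nonneg _).trans (hΩ₀ 0 le_rfl)
  obtain ⟨K, hK, γ, hγ, hdecay⟩ := hHur.exists_norm_le_mul_exp
  refine ⟨4 * (1 + M) * K * (1 + 2 * M), by positivity, γ, hγ, fun z ω hz hω t ht => ?_⟩
  have hxt := hdecay _ (fun s hs => hasDerivAt_sumElim_of_closedLoop (hΩ₀diff s hs) (hz s hs)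
    (hω s hs)) t ht
  calc enorm3 (z t) + enorm3 (ω t)
      ≤ 4 * (1 + M) * ‖Sum.elim (z t) (cross (z t) (Ω₀ t) + ω t)‖ :=
        enorm3_add_enorm3_le_norm_sumElim (hΩ₀ t ht)
    _ ≤ 4 * (1 + M) * (K * Real.exp (-γ * t) * ((1 + 2 * M) * (enorm3 (z 0) + enorm3 (ω 0)))) := by
        gcongr
        exact hxt.trans (by gcongr; exact norm_sumElim_le (hΩ₀ 0 le_rfl))
    _ = _ := by ring

/-- Proposition 1: the feedback `Δu = −K_P z − K_D(z×Ω₀+ΔΩ) − (z×Ω₀+ΔΩ)×Ω₀ − z×u₀`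
exponentially stabilizes the origin of the linearized rigid body tracking error
dynamics, provided `[[0, I],[−K_P, −K_D]]` is Hurwitz. -/
theorem prop1_exp_stabilization (ke : ℝ) (hke : 0 < ke)
    (Ω₀ u₀ : ℝ → Fin 3 → ℝ)
    (hΩ₀diff : ∀ t, 0 ≤ t → HasDerivAt Ω₀ (u₀ t) t)
    (hΩ₀bdd : ∃ M, ∀ t, 0 ≤ t → enorm3 (Ω₀ t) ≤ M)
    (KP KD : Mat3)
    (hHur : IsHurwitzMat (Matrix.fromBlocks (0 : Mat3) (1 : Mat3) (-KP) (-KD))) :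
    ∃ C > (0:ℝ), ∃ lam > (0:ℝ),
      ∀ (Zs : ℝ → Mat3) (z ω : ℝ → Fin 3 → ℝ),
        (∀ t, 0 ≤ t → (Zs t)ᵀ = Zs t) →
        (∀ t, 0 ≤ t →
          HasDerivAt Zs (mcomm (Zs t) (hat (Ω₀ t)) - (2 * ke) • Zs t) t) →
        (∀ t, 0 ≤ t → HasDerivAt z (cross (z t) (Ω₀ t) + ω t) t) →
        (∀ t, 0 ≤ t → HasDerivAt ω
          (-(KP.mulVec (z t)) - KD.mulVec (cross (z t) (Ω₀ t) + ω t)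
            - cross (cross (z t) (Ω₀ t) + ω t) (Ω₀ t) - cross (z t) (u₀ t)) t) →
        ∀ t, 0 ≤ t →
          ‖Zs t‖ + enorm3 (z t) + enorm3 (ω t) ≤
            C * Real.exp (-lam * t) * (‖Zs 0‖ + enorm3 (z 0) + enorm3 (ω 0)) := by
  obtain ⟨M, hM⟩ := hΩ₀bdd
  obtain ⟨C, hC, γ, hγ, hdecay⟩ := exists_enorm3_le_of_closedLoop hΩ₀diff
    (fun t ht => (norm_le_enorm3 _).trans (hM t ht)) hHur
  refine ⟨1 + C, by positivity, min γ (2 * ke), by positivity, ?_⟩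
  intro Zs z ω hsym hZs hz hω t ht
  have hZt : ‖Zs t‖ = Real.exp (-(2 * ke) * t) * ‖Zs 0‖ :=
    Matrix.frobenius_norm_eq_exp_of_hasDerivAt hsym hZs ht
  have hzω := hdecay z ω hz hω t ht
  have hexpZ : Real.exp (-(2 * ke) * t) ≤ Real.exp (-min γ (2 * ke) * t) := by
    gcongr; exact min_le_right _ _
  have hexpx : Real.exp (-γ * t) ≤ Real.exp (-min γ (2 * ke) * t) := by
    gcongr; exact min_le_left _ _
  have hZ0 := norm_nonneg (Zs 0)
  have hS : 0 ≤ enorm3 (z 0) + enorm3 (ω 0) :=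
    add_nonneg (Real.sqrt_nonneg _) (Real.sqrt_nonneg _)
  nlinarith [mul_le_mul_of_nonneg_right hexpZ hZ0,
    mul_le_mul_of_nonneg_left hexpx (mul_nonneg hC.le hS),
    mul_nonneg (mul_nonneg hC.le (Real.exp_nonneg (-min γ (2 * ke) * t))) hZ0,
    mul_nonneg (Real.exp_nonneg (-min γ (2 * ke) * t)) hS]

end
end

section
/- Let r > 0, B_r = {z ∈ ℝⁿ : ‖z‖ < r}, and let f : [0,∞) × B_r → ℝⁿ be continuous with f(t,0) = 0 for all t ≥ 0 and continuously differentiable in z, and set A(t) = ∂f/∂z(t,0). Assume: (i) the linear time-varying system ẏ = A(t)·y is exponentially stable, i.e., there exist k ≥ 1 and γ > 0 such that every solution satisfies ‖y(t)‖ ≤ k·e^{−γ(t−t₀)}·‖y(t₀)‖ for all t ≥ t₀ ≥ 0; (ii) there exist L₁, L₂ > 0 such that ‖∂f/∂z(t,z)‖ ≤ L₁ and ‖∂f/∂z(t,z₁) − ∂f/∂z(t,z₂)‖ ≤ L₂·‖z₁ − z₂‖ for all t ≥ 0 and z, z₁, z₂ ∈ B_r. Then the origin is exponentially stable for ż = f(t,z):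 there exist δ > 0, C > 0 and λ > 0 such that every solution z : [0,∞) → B_r of ż(t) = f(t, z(t)) with ‖z(0)‖ < δ satisfies ‖z(t)‖ ≤ C·e^{−λt}·‖z(0)‖ for all t ≥ 0. -/
/-!
Write `A t = Df t 0`. By the mean value inequality, on `B_r` we have `‖f t w‖ ≤ L₁ ‖w‖` and
`‖f t w - A t w‖ ≤ L₂ ‖w‖²`. Choose `T` with `k e^{-γT} = 1/4`. On a window `[t₀, t₀ + T]` the
norm of a solution `z` grows at most by `E₀ = e^{L₁T}`, so by Grönwall `z` stays within
`(L₂/L₁) E₀³ ‖z t₀‖²` of the solution `y` of `ẏ = A y` with `y t₀ = z t₀`, and `y` has contracted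
by the factor `1/4`. Hence `‖z (t₀ + T)‖ ≤ ‖z t₀‖ / 2` as long as `‖z‖` is small, and iterating
gives decay at rate `log 2 / T`.

The comparison solutions `y` are needed on all of `[0, ∞)`. They are glued from Picard–Lindelöf
solutions of uniform length, which requires `t ↦ A t x` to be continuous, a consequence of the
continuity of `f`.
-/

open Set Filter Topology Metric Real
open scoped NNReal

section MeanValue

variable {E F : Type*} [NormedAddCommGroup E] [NormedSpace ℝ E] [NormedAddCommGroup F]
  [NormedSpace ℝ F] {g : E → F} {g' : E → E →L[ℝ] F} {r C : ℝ} {w : E}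

theorem norm_sub_image_zero_le_of_hasFDerivAt_ball
    (hg : ∀ u ∈ ball (0 : E) r, HasFDerivAt g (g' u) u)
    (hC : ∀ u ∈ closedBall (0 : E) ‖w‖, ‖g' u‖ ≤ C) (hw : w ∈ ball (0 : E) r) :
    ‖g w - g 0‖ ≤ C * ‖w‖ := by
  have hsub : closedBall (0 : E) ‖w‖ ⊆ ball 0 r :=
    closedBall_subset_ball (mem_ball_zero_iff.1 hw)
  simpa using (convex_closedBall (0 : E) ‖w‖).norm_image_sub_le_of_norm_hasFDerivWithin_le
    (fun u hu => (hg u (hsub hu)).hasFDerivWithinAt) hC (mem_closedBall_self (norm_nonneg w))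
    (mem_closedBall_zero_iff.2 le_rfl)

theorem norm_le_mul_norm_of_hasFDerivAt_ball (hg0 : g 0 = 0)
    (hg : ∀ u ∈ ball (0 : E) r, HasFDerivAt g (g' u) u) (hC : ∀ u ∈ ball (0 : E) r, ‖g' u‖ ≤ C)
    (hw : w ∈ ball (0 : E) r) : ‖g w‖ ≤ C * ‖w‖ := by
  simpa [hg0] using norm_sub_image_zero_le_of_hasFDerivAt_ball hg
    (fun u hu => hC u (closedBall_subset_ball (mem_ball_zero_iff.1 hw) hu)) hw

theorem norm_sub_fderiv_zero_le_of_hasFDerivAt_ball {L : ℝ} (hL : 0 ≤ L) (hg0 : g 0 = 0)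
    (hg : ∀ u ∈ ball (0 : E) r, HasFDerivAt g (g' u) u)
    (hlip : ∀ u ∈ ball (0 : E) r, ‖g' u - g' 0‖ ≤ L * ‖u‖) (hw : w ∈ ball (0 : E) r) :
    ‖g w - g' 0 w‖ ≤ L * ‖w‖ ^ 2 := by
  have hsub : closedBall (0 : E) ‖w‖ ⊆ ball 0 r :=
    closedBall_subset_ball (mem_ball_zero_iff.1 hw)
  have key := norm_sub_image_zero_le_of_hasFDerivAt_ball (g := fun u => g u - g' 0 u)
    (g' := fun u => g' u - g' 0) (C := L * ‖w‖) (fun u hu => (hg u hu).sub (g' 0).hasFDerivAt)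
    (fun u hu => (hlip u (hsub hu)).trans (by gcongr; exact mem_closedBall_zero_iff.1 hu)) hw
  simpa [hg0, sq, mul_assoc] using key

end MeanValue

theorem continuousOn_clm_apply_of_norm_sub_le_sq {X E F : Type*} [TopologicalSpace X]
    [NormedAddCommGroup E] [NormedSpace ℝ E] [NormedAddCommGroup F] [NormedSpace ℝ F]
    {f : X → E → F} {A : X → E →L[ℝ] F} {s : Set X} {r C : ℝ} (hr : 0 < r)
    (hf : ContinuousOn (fun p : X × E => f p.1 p.2) (s ×ˢ ball 0 r))
    (hrem : ∀ t ∈ s, ∀ w ∈ ball (0 : E) r, ‖f t w - A t w‖ ≤ C * ‖w‖ ^ 2) (x : E) :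
    ContinuousOn (fun t => A t x) s := by
  -- `A t x` is the uniform limit on `s` of `σ⁻¹ f t (σ x)` as `σ → 0+`.
  have hball : ∀ᶠ σ in 𝓝[>] (0 : ℝ), σ • x ∈ ball (0 : E) r :=
    nhdsWithin_le_nhds (((continuous_id.smul continuous_const).tendsto' 0 0
      (by simp)).eventually (isOpen_ball.mem_nhds (mem_ball_self hr)))
  have hquot : ∀ᶠ σ in 𝓝[>] (0 : ℝ), ContinuousOn (fun t => σ⁻¹ • f t (σ • x)) s :=
    hball.mono fun σ hσ => (hf.comp (continuous_id.prodMk continuous_const).continuousOn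
      fun t ht => ⟨ht, hσ⟩).const_smul σ⁻¹
  refine TendstoUniformlyOn.continuousOn ?_ hquot.frequently
  rw [Metric.tendstoUniformlyOn_iff]
  intro ε hε
  have hsmall : Tendsto (fun σ : ℝ => C * ‖x‖ ^ 2 * σ) (𝓝[>] 0) (𝓝 0) :=
    ((continuous_const_mul _).tendsto' (0 : ℝ) 0 (mul_zero _)).mono_left nhdsWithin_le_nhds
  filter_upwards [self_mem_nhdsWithin, hsmall.eventually (gt_mem_nhds hε), hball]
    with σ (hσ : 0 < σ) hσε hσr t ht
  have hquot_sub : A t x - σ⁻¹ • f t (σ • x) = σ⁻¹ • (A t (σ • x) - f t (σ • x)) := by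
    rw [map_smul, smul_sub, inv_smul_smul₀ hσ.ne']
  calc dist (A t x) (σ⁻¹ • f t (σ • x)) = σ⁻¹ * ‖f t (σ • x) - A t (σ • x)‖ := by
        rw [dist_eq_norm, hquot_sub, norm_smul, norm_sub_rev,
          Real.norm_of_nonneg (inv_nonneg.2 hσ.le)]
    _ ≤ σ⁻¹ * (C * ‖σ • x‖ ^ 2) := by gcongr; exact hrem t ht _ hσr
    _ = C * ‖x‖ ^ 2 * σ := by
        rw [norm_smul, Real.norm_of_nonneg hσ.le]; field_simp
    _ < ε := hσε

section IntegralCurve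

variable {E : Type*} [NormedAddCommGroup E] [NormedSpace ℝ E] {v : ℝ → E → E} {K : ℝ≥0}
  {γ γ' : ℝ → E} {s s' : Set ℝ} {a b a' b' t₀ : ℝ}

theorem IsIntegralCurveOn.congr (hγ : IsIntegralCurveOn γ v s) (h : EqOn γ' γ s) :
    IsIntegralCurveOn γ' v s := fun t ht => by
  rw [h ht]
  exact (hγ t ht).congr h (h ht)

theorem IsIntegralCurveOn.union_of_isOpen (hγ : IsIntegralCurveOn γ v s)
    (hγ' : IsIntegralCurveOn γ v s') (hs : IsOpen s) (hs' : IsOpen s') :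
    IsIntegralCurveOn γ v (s ∪ s') := by
  rintro t (ht | ht)
  · exact ((hγ t ht).hasDerivAt (hs.mem_nhds ht)).hasDerivWithinAt
  · exact ((hγ' t ht).hasDerivAt (hs'.mem_nhds ht)).hasDerivWithinAt

theorem IsIntegralCurveOn.eqOn_Ioo (hv : ∀ t, LipschitzWith K (v t))
    (hγ : IsIntegralCurveOn γ v (Ioo a b)) (hγ' : IsIntegralCurveOn γ' v (Ioo a b))
    (ht₀ : t₀ ∈ Ioo a b) (h : γ t₀ = γ' t₀) : EqOn γ γ' (Ioo a b) :=
  ODE_solution_unique_of_mem_Ioo (s := fun _ => univ) (fun t _ => (hv t).lipschitzOnWith) ht₀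
    (fun t ht => ⟨(hγ t ht).hasDerivAt (Ioo_mem_nhds ht.1 ht.2), mem_univ _⟩)
    (fun t ht => ⟨(hγ' t ht).hasDerivAt (Ioo_mem_nhds ht.1 ht.2), mem_univ _⟩) h

theorem IsIntegralCurveOn.piecewise_Ioo (hv : ∀ t, LipschitzWith K (v t))
    (hγ : IsIntegralCurveOn γ v (Ioo a b)) (hγ' : IsIntegralCurveOn γ' v (Ioo a' b'))
    (ht₀ : t₀ ∈ Ioo a b ∩ Ioo a' b') (h : γ t₀ = γ' t₀) :
    IsIntegralCurveOn ((Ioo a b).piecewise γ γ') v (Ioo a b ∪ Ioo a' b') := by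
  have hagree : EqOn ((Ioo a b).piecewise γ γ') γ' (Ioo a' b') := by
    intro t ht
    by_cases hmem : t ∈ Ioo a b
    · rw [piecewise_eq_of_mem _ _ _ hmem]
      exact (hγ.mono (Ioo_subset_Ioo (le_max_left a a') (min_le_left b b'))).eqOn_Ioo hv
        (hγ'.mono (Ioo_subset_Ioo (le_max_right a a') (min_le_right b b')))
        ⟨max_lt ht₀.1.1 ht₀.2.1, lt_min ht₀.1.2 ht₀.2.2⟩ h
        ⟨max_lt hmem.1 ht.1, lt_min hmem.2 ht.2⟩
    · exact piecewise_eq_of_notMem _ _ _ hmem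
  exact (hγ.congr (piecewise_eqOn _ _ _)).union_of_isOpen (hγ'.congr hagree) isOpen_Ioo isOpen_Ioo

theorem exists_isIntegralCurveOn_Ioo_of_uniform_local (hv : ∀ t, LipschitzWith K (v t))
    {δ : ℝ} (hδ : 0 < δ)
    (hloc : ∀ s x, ∃ γ : ℝ → E, γ s = x ∧ IsIntegralCurveOn γ v (Ioo (s - 2 * δ) (s + 2 * δ)))
    (t₀ : ℝ) (x₀ : E) (n : ℕ) : ∃ γ : ℝ → E, γ t₀ = x₀ ∧
      IsIntegralCurveOn γ v (Ioo (t₀ - (n + 2) * δ) (t₀ + (n + 2) * δ)) := by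
  induction n with
  | zero => simpa using hloc t₀ x₀
  | succ n ih =>
    obtain ⟨γ, hγ₀, hγ⟩ := ih
    have hn : (0 : ℝ) ≤ n := n.cast_nonneg
    have ht₀ : t₀ ∈ Ioo (t₀ - (n + 2) * δ) (t₀ + (n + 2) * δ) := ⟨by nlinarith, by nlinarith⟩
    obtain ⟨γr, hγr₀, hγr⟩ := hloc (t₀ + (n + 1) * δ) (γ (t₀ + (n + 1) * δ))
    set γ₁ := (Ioo (t₀ - (n + 2) * δ) (t₀ + (n + 2) * δ)).piecewise γ γr
    have hγ₁ : IsIntegralCurveOn γ₁ v (Ioo (t₀ - (n + 2) * δ) (t₀ + (n + 3) * δ)) :=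
      (hγ.piecewise_Ioo (t₀ := t₀ + (n + 1) * δ) hv hγr
        ⟨⟨by nlinarith, by nlinarith⟩, ⟨by linarith, by linarith⟩⟩ hγr₀.symm).mono
        (Ioo_subset_Ioo_union_Ioo le_rfl (by linarith) (by linarith))
    obtain ⟨γl, hγl₀, hγl⟩ := hloc (t₀ - (n + 1) * δ) (γ₁ (t₀ - (n + 1) * δ))
    have hγ₂ := hγ₁.piecewise_Ioo (t₀ := t₀ - (n + 1) * δ) hv hγl
      ⟨⟨by nlinarith, by nlinarith⟩, ⟨by linarith, by linarith⟩⟩ hγl₀.symm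
    rw [union_comm] at hγ₂
    refine ⟨(Ioo (t₀ - (n + 2) * δ) (t₀ + (n + 3) * δ)).piecewise γ₁ γl, ?_,
      hγ₂.mono (Ioo_subset_Ioo_union_Ioo (by push_cast; linarith) (by linarith)
        (by push_cast; linarith))⟩
    rw [piecewise_eq_of_mem _ _ _ (Ioo_subset_Ioo_right (by linarith) ht₀)]
    exact (piecewise_eq_of_mem _ _ _ ht₀).trans hγ₀

theorem exists_isIntegralCurve_of_uniform_local (hv : ∀ t, LipschitzWith K (v t))
    {ε : ℝ} (hε : 0 < ε)
    (hloc : ∀ s x, ∃ γ : ℝ → E, γ s = x ∧ IsIntegralCurveOn γ v (Ioo (s - ε) (s + ε)))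
    (t₀ : ℝ) (x₀ : E) : ∃ γ : ℝ → E, γ t₀ = x₀ ∧ IsIntegralCurve γ v := by
  have hδ : 0 < ε / 2 := half_pos hε
  rw [← mul_div_cancel₀ ε (two_ne_zero' ℝ)] at hloc
  have hall : ∀ R : ℝ, ∃ γ : ℝ → E, γ t₀ = x₀ ∧ IsIntegralCurveOn γ v (Ioo (t₀ - R) (t₀ + R)) := by
    intro R
    obtain ⟨n, hn⟩ := exists_nat_gt (R / (ε / 2))
    obtain ⟨γ, hγ₀, hγ⟩ := exists_isIntegralCurveOn_Ioo_of_uniform_local hv hδ hloc t₀ x₀ n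
    have hR : R ≤ (n + 2) * (ε / 2) := by rw [div_lt_iff₀ hδ] at hn; nlinarith
    exact ⟨γ, hγ₀, hγ.mono (Ioo_subset_Ioo (by linarith) (by linarith))⟩
  choose Γ hΓ₀ hΓ using hall
  have hagree : ∀ R, EqOn (fun t => Γ (|t - t₀| + 1) t) (Γ R) (Ioo (t₀ - R) (t₀ + R)) := by
    intro R t ht
    set m := min R (|t - t₀| + 1)
    have hm : |t - t₀| < m :=
      lt_min (abs_sub_lt_iff.2 ⟨by linarith [ht.2], by linarith [ht.1]⟩) (lt_add_one _)
    have hsub : ∀ R', m ≤ R' → Ioo (t₀ - m) (t₀ + m) ⊆ Ioo (t₀ - R') (t₀ + R') :=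
      fun R' h => Ioo_subset_Ioo (by linarith) (by linarith)
    obtain ⟨h₁, h₂⟩ := abs_sub_lt_iff.1 hm
    exact ((hΓ _).mono (hsub _ (min_le_right _ _))).eqOn_Ioo hv
      ((hΓ R).mono (hsub _ (min_le_left _ _)))
      ⟨by linarith [abs_nonneg (t - t₀)], by linarith [abs_nonneg (t - t₀)]⟩
      (by rw [hΓ₀, hΓ₀]) ⟨by linarith, by linarith⟩
  refine ⟨fun t => Γ (|t - t₀| + 1) t, hΓ₀ _, fun t => ?_⟩
  have ht : t ∈ Ioo (t₀ - (|t - t₀| + 1)) (t₀ + (|t - t₀| + 1)) := by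
    obtain ⟨h₁, h₂⟩ := abs_sub_lt_iff.1 (lt_add_one |t - t₀|)
    exact ⟨by linarith, by linarith⟩
  exact ((hΓ _).congr (hagree _) t ht).hasDerivAt (Ioo_mem_nhds ht.1 ht.2)

end IntegralCurve

section LinearSystem

variable {E : Type*} [NormedAddCommGroup E] [NormedSpace ℝ E] [CompleteSpace E]
  {A : ℝ → E →L[ℝ] E} {K : ℝ≥0}

theorem exists_isIntegralCurveOn_Ioo_clm (hA : ∀ t, ‖A t‖₊ ≤ K)
    (hcont : ∀ x, Continuous fun t => A t x) (s : ℝ) (x : E) :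
    ∃ γ : ℝ → E, γ s = x ∧ IsIntegralCurveOn γ (fun t => A t)
      (Ioo (s - 1 / (2 * K + 1)) (s + 1 / (2 * K + 1))) := by
  set h : ℝ := 1 / (2 * K + 1)
  have hh : 0 < h := by positivity
  -- the length `h` does not depend on `x`, since `K (2 ‖x‖ + 1) h ≤ ‖x‖ + 1`
  have hpl : IsPicardLindelof (fun t => A t) (tmin := s - h) (tmax := s + h)
      ⟨s, by constructor <;> linarith⟩ x (‖x‖₊ + 1) 0 (K * (2 * ‖x‖₊ + 1)) K := by
    refine ⟨fun t _ => ((A t).lipschitz.weaken (hA t)).lipschitzOnWith,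
      fun y _ => (hcont y).continuousOn, fun t _ y hy => ?_, ?_⟩
    · have hy' : ‖y‖ ≤ 2 * ‖x‖ + 1 := by
        have := norm_le_norm_add_norm_sub' y x
        have := mem_closedBall_iff_norm.1 hy
        push_cast at this ⊢
        linarith
      calc ‖A t y‖ ≤ ‖A t‖ * ‖y‖ := (A t).le_opNorm y
        _ ≤ K * (2 * ‖x‖ + 1) := by
          gcongr
          exact_mod_cast hA t
        _ = _ := by push_cast; ring
    · simp only [NNReal.coe_mul, NNReal.coe_add, NNReal.coe_ofNat, coe_nnnorm, NNReal.coe_one,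
        NNReal.coe_zero, sub_zero, add_sub_cancel_left, sub_sub_cancel, max_self]
      rw [mul_one_div, div_le_iff₀ (by positivity)]
      nlinarith [norm_nonneg x, K.coe_nonneg]
  obtain ⟨γ, hγ₀, hγ⟩ := hpl.exists_eq_forall_mem_Icc_hasDerivWithinAt₀
  exact ⟨γ, hγ₀, fun t ht =>
    ((hγ t (Ioo_subset_Icc_self ht)).hasDerivAt (Icc_mem_nhds ht.1 ht.2)).hasDerivWithinAt⟩

theorem exists_isIntegralCurve_clm (hA : ∀ t, ‖A t‖₊ ≤ K)
    (hcont : ∀ x, Continuous fun t => A t x) (t₀ : ℝ) (x₀ : E) :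
    ∃ γ : ℝ → E, γ t₀ = x₀ ∧ IsIntegralCurve γ (fun t => A t) :=
  exists_isIntegralCurve_of_uniform_local (fun t => (A t).lipschitz.weaken (hA t))
    (by positivity) (exists_isIntegralCurveOn_Ioo_clm hA hcont) t₀ x₀

theorem exists_forall_nonneg_hasDerivAt_clm {L : ℝ} (hA : ∀ t, 0 ≤ t → ‖A t‖ ≤ L)
    (hcont : ∀ x, ContinuousOn (fun t => A t x) (Ici 0)) (t₀ : ℝ) (x₀ : E) :
    ∃ y : ℝ → E, y t₀ = x₀ ∧ ∀ t, 0 ≤ t → HasDerivAt y (A t (y t)) t := by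
  obtain ⟨y, hy₀, hy⟩ := exists_isIntegralCurve_clm (A := fun t => A (max t 0)) (K := L.toNNReal)
    (fun t => by simpa [norm_toNNReal] using Real.toNNReal_le_toNNReal (hA _ (le_max_right t 0)))
    (fun x => (hcont x).comp_continuous (continuous_id.max continuous_const)
      fun t => le_max_right t 0) t₀ x₀
  exact ⟨y, hy₀, fun t ht => by simpa [max_eq_left ht] using hy t⟩

end LinearSystem

section Gronwall

variable {E : Type*} [NormedAddCommGroup E] [NormedSpace ℝ E] {f : ℝ → E → E}
  {A : ℝ → E →L[ℝ] E} {z y : ℝ → E} {a T K L : ℝ}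

theorem norm_le_exp_mul_of_norm_le_mul_norm (hK : 0 ≤ K)
    (hz : ∀ t ∈ Icc a (a + T), HasDerivAt z (f t (z t)) t)
    (hf : ∀ t ∈ Icc a (a + T), ‖f t (z t)‖ ≤ K * ‖z t‖) :
    ∀ t ∈ Icc a (a + T), ‖z t‖ ≤ exp (K * T) * ‖z a‖ := by
  intro t ht
  have hgron := norm_le_gronwallBound_of_norm_deriv_right_le (HasDerivAt.continuousOn hz)
    (fun t ht => (hz t (Ico_subset_Icc_self ht)).hasDerivWithinAt) le_rfl
    (fun t ht => (hf t (Ico_subset_Icc_self ht)).trans_eq (add_zero _).symm) t ht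
  rw [gronwallBound_ε0, mul_comm] at hgron
  exact hgron.trans (by gcongr; linarith [ht.2])

theorem norm_sub_le_gronwallBound_of_linearization (hT : 0 ≤ T)
    (hz : ∀ t ∈ Icc a (a + T), HasDerivAt z (f t (z t)) t)
    (hy : ∀ t ∈ Icc a (a + T), HasDerivAt y (A t (y t)) t) (hya : y a = z a)
    (hA : ∀ t ∈ Icc a (a + T), ‖A t‖ ≤ K) {ε : ℝ}
    (hrem : ∀ t ∈ Icc a (a + T), ‖f t (z t) - A t (z t)‖ ≤ ε) :
    ‖z (a + T) - y (a + T)‖ ≤ gronwallBound 0 K ε T := by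
  have hzy : ∀ t ∈ Icc a (a + T), HasDerivAt (fun t => z t - y t) (f t (z t) - A t (y t)) t :=
    fun t ht => (hz t ht).sub (hy t ht)
  have hbound : ∀ t ∈ Icc a (a + T), ‖f t (z t) - A t (y t)‖ ≤ K * ‖z t - y t‖ + ε := by
    intro t ht
    calc ‖f t (z t) - A t (y t)‖ = ‖A t (z t - y t) + (f t (z t) - A t (z t))‖ := by
          rw [map_sub]; abel_nf
      _ ≤ ‖A t‖ * ‖z t - y t‖ + ε := norm_add_le_of_le ((A t).le_opNorm _) (hrem t ht)
      _ ≤ K * ‖z t - y t‖ + ε := by gcongr; exact hA t ht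
  simpa using norm_le_gronwallBound_of_norm_deriv_right_le (HasDerivAt.continuousOn hzy)
    (fun t ht => (hzy t (Ico_subset_Icc_self ht)).hasDerivWithinAt) (by simp [hya])
    (fun t ht => hbound t (Ico_subset_Icc_self ht)) (a + T) ⟨by linarith, le_rfl⟩

theorem norm_le_add_sq_of_linearization (hT : 0 ≤ T) (hK : 0 < K) (hL : 0 ≤ L)
    (hz : ∀ t ∈ Icc a (a + T), HasDerivAt z (f t (z t)) t)
    (hy : ∀ t ∈ Icc a (a + T), HasDerivAt y (A t (y t)) t) (hya : y a = z a)
    (hA : ∀ t ∈ Icc a (a + T), ‖A t‖ ≤ K)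
    (hf : ∀ t ∈ Icc a (a + T), ‖f t (z t)‖ ≤ K * ‖z t‖)
    (hrem : ∀ t ∈ Icc a (a + T), ‖f t (z t) - A t (z t)‖ ≤ L * ‖z t‖ ^ 2) :
    ‖z (a + T)‖ ≤ ‖y (a + T)‖ + L / K * exp (K * T) ^ 3 * ‖z a‖ ^ 2 := by
  set E₀ := exp (K * T)
  have hgrowth := norm_le_exp_mul_of_norm_le_mul_norm hK.le hz hf
  have hpert := norm_sub_le_gronwallBound_of_linearization hT hz hy hya hA
    (ε := L * (E₀ * ‖z a‖) ^ 2) fun t ht => (hrem t ht).trans (by gcongr; exact hgrowth t ht)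
  rw [gronwallBound_of_K_ne_0 hK.ne'] at hpert
  calc ‖z (a + T)‖ ≤ ‖y (a + T)‖ + ‖z (a + T) - y (a + T)‖ := norm_le_norm_add_norm_sub' _ _
    _ ≤ ‖y (a + T)‖ + L * (E₀ * ‖z a‖) ^ 2 / K * (E₀ - 1) := by simpa using hpert
    _ = ‖y (a + T)‖ + L / K * E₀ ^ 2 * ‖z a‖ ^ 2 * (E₀ - 1) := by ring
    _ ≤ ‖y (a + T)‖ + L / K * E₀ ^ 2 * ‖z a‖ ^ 2 * E₀ := by gcongr; linarith
    _ = ‖y (a + T)‖ + L / K * E₀ ^ 3 * ‖z a‖ ^ 2 := by ring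

end Gronwall

section Decay

variable {u : ℝ → ℝ} {T B M : ℝ}

theorem le_half_pow_mul_of_step (hu : ∀ t, 0 ≤ t → 0 ≤ u t) (hT : 0 ≤ T) (hB : 0 ≤ B)
    (h0 : B * u 0 ≤ 1 / 4) (hstep : ∀ t, 0 ≤ t → u (t + T) ≤ u t / 4 + B * u t ^ 2) (j : ℕ) :
    u (j * T) ≤ (1 / 2) ^ j * u 0 := by
  induction j with
  | zero => simp
  | succ j ih =>
    have hjT : 0 ≤ (j : ℝ) * T := mul_nonneg j.cast_nonneg hT
    have hle : u (j * T) ≤ u 0 :=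
      ih.trans (mul_le_of_le_one_left (hu 0 le_rfl) (pow_le_one₀ (by norm_num) (by norm_num)))
    have hsmall : B * u (j * T) * u (j * T) ≤ u (j * T) / 4 := by
      nlinarith [mul_le_mul_of_nonneg_left hle hB, hu _ hjT]
    calc u ((j + 1 : ℕ) * T) = u (j * T + T) := by push_cast; ring_nf
      _ ≤ u (j * T) / 4 + B * u (j * T) ^ 2 := hstep _ hjT
      _ ≤ u (j * T) / 2 := by nlinarith
      _ ≤ (1 / 2) ^ (j + 1) * u 0 := by rw [pow_succ]; linarith

theorem half_pow_floor_div_le (t : ℝ) :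
    (1 / 2 : ℝ) ^ ⌊t / T⌋₊ ≤ 2 * exp (-(log 2 / T) * t) := by
  have hj : t / T < ⌊t / T⌋₊ + 1 := Nat.lt_floor_add_one _
  have hlog : 0 < log 2 := log_pos one_lt_two
  have hhalf : (1 / 2 : ℝ) = exp (-log 2) := by rw [exp_neg, exp_log two_pos, one_div]
  rw [hhalf, ← exp_nat_mul, ← exp_log (two_pos (α := ℝ)), ← exp_add, exp_log two_pos]
  gcongr
  have : log 2 / T * t = log 2 * (t / T) := by ring
  nlinarith [mul_lt_mul_of_pos_left hj hlog]

theorem le_mul_exp_of_step (hu : ∀ t, 0 ≤ t → 0 ≤ u t) (hT : 0 < T) (hB : 0 ≤ B) (hM : 0 ≤ M)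
    (h0 : B * u 0 ≤ 1 / 4) (hstep : ∀ t, 0 ≤ t → u (t + T) ≤ u t / 4 + B * u t ^ 2)
    (hgrow : ∀ t, 0 ≤ t → ∀ s ∈ Icc t (t + T), u s ≤ M * u t) (t : ℝ) (ht : 0 ≤ t) :
    u t ≤ 2 * M * exp (-(log 2 / T) * t) * u 0 := by
  set j := ⌊t / T⌋₊
  have hjT : (j : ℝ) * T ≤ t := (le_div_iff₀ hT).1 (Nat.floor_le (by positivity))
  have htT : t ≤ j * T + T := by
    have := Nat.lt_floor_add_one (t / T)
    rw [div_lt_iff₀ hT] at this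
    linarith
  calc u t ≤ M * u (j * T) := hgrow _ (by positivity) t ⟨hjT, htT⟩
    _ ≤ M * ((1 / 2) ^ j * u 0) := by
        gcongr; exact le_half_pow_mul_of_step hu hT.le hB h0 hstep j
    _ ≤ M * (2 * exp (-(log 2 / T) * t) * u 0) := by
        gcongr; exacts [hu 0 le_rfl, half_pow_floor_div_le t]
    _ = 2 * M * exp (-(log 2 / T) * t) * u 0 := by ring

end Decay

theorem linearization_exponential_stability_general
    (n : ℕ) (r : ℝ) (hr : 0 < r)
    (f : ℝ → EuclideanSpace ℝ (Fin n) → EuclideanSpace ℝ (Fin n))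
    (Df : ℝ → EuclideanSpace ℝ (Fin n) →
      (EuclideanSpace ℝ (Fin n) →L[ℝ] EuclideanSpace ℝ (Fin n)))
    (hcont : ContinuousOn (fun p : ℝ × EuclideanSpace ℝ (Fin n) => f p.1 p.2)
      (Set.Ici (0:ℝ) ×ˢ Metric.ball 0 r))
    (hf0 : ∀ t, 0 ≤ t → f t 0 = 0)
    (hDf : ∀ t, 0 ≤ t → ∀ z ∈ Metric.ball (0 : EuclideanSpace ℝ (Fin n)) r,
      HasFDerivAt (f t) (Df t z) z)
    -- (i) exponential stability of the linear time-varying system ẏ = A(t)y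
    (k γ : ℝ) (hk : 1 ≤ k) (hγ : 0 < γ)
    (hlin : ∀ y : ℝ → EuclideanSpace ℝ (Fin n),
      (∀ t, 0 ≤ t → HasDerivAt y (Df t 0 (y t)) t) →
      ∀ t₀ t, 0 ≤ t₀ → t₀ ≤ t →
        ‖y t‖ ≤ k * Real.exp (-γ * (t - t₀)) * ‖y t₀‖)
    -- (ii) uniform boundedness and Lipschitz continuity of the Jacobian
    (L₁ L₂ : ℝ) (hL₁ : 0 < L₁) (hL₂ : 0 < L₂)
    (hbdd : ∀ t, 0 ≤ t → ∀ z ∈ Metric.ball (0 : EuclideanSpace ℝ (Fin n)) r,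
      ‖Df t z‖ ≤ L₁)
    (hlip : ∀ t, 0 ≤ t → ∀ z₁ ∈ Metric.ball (0 : EuclideanSpace ℝ (Fin n)) r,
      ∀ z₂ ∈ Metric.ball (0 : EuclideanSpace ℝ (Fin n)) r,
        ‖Df t z₁ - Df t z₂‖ ≤ L₂ * ‖z₁ - z₂‖) :
    ∃ δ > (0:ℝ), ∃ C > (0:ℝ), ∃ lam > (0:ℝ),
      ∀ z : ℝ → EuclideanSpace ℝ (Fin n),
        (∀ t, 0 ≤ t → z t ∈ Metric.ball (0 : EuclideanSpace ℝ (Fin n)) r) →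
        (∀ t, 0 ≤ t → HasDerivAt z (f t (z t)) t) →
        ‖z 0‖ < δ →
        ∀ t, 0 ≤ t → ‖z t‖ ≤ C * Real.exp (-lam * t) * ‖z 0‖ := by
  have hA : ∀ t, 0 ≤ t → ‖Df t 0‖ ≤ L₁ := fun t ht => hbdd t ht 0 (mem_ball_self hr)
  have hgrowth : ∀ t, 0 ≤ t → ∀ w ∈ ball 0 r, ‖f t w‖ ≤ L₁ * ‖w‖ := fun t ht _ hw =>
    norm_le_mul_norm_of_hasFDerivAt_ball (hf0 t ht) (hDf t ht) (hbdd t ht) hw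
  have hrem : ∀ t, 0 ≤ t → ∀ w ∈ ball 0 r, ‖f t w - Df t 0 w‖ ≤ L₂ * ‖w‖ ^ 2 := fun t ht _ hw =>
    norm_sub_fderiv_zero_le_of_hasFDerivAt_ball hL₂.le (hf0 t ht) (hDf t ht)
      (fun u hu => by simpa using hlip t ht u hu 0 (mem_ball_self hr)) hw
  have hsol := exists_forall_nonneg_hasDerivAt_clm hA
    (continuousOn_clm_apply_of_norm_sub_le_sq hr hcont hrem)
  set T := log (4 * k) / γ
  have hT : 0 < T := div_pos (log_pos (by linarith)) hγ
  have hγT : -γ * T = -log (4 * k) := by rw [neg_mul, mul_div_cancel₀ _ hγ.ne']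
  have hkT : k * exp (-γ * T) = 1 / 4 := by
    rw [hγT, exp_neg, exp_log (by linarith)]
    field_simp
  set B := L₂ / L₁ * exp (L₁ * T) ^ 3
  have hB : 0 < B := by positivity
  refine ⟨1 / (4 * B), by positivity, 2 * exp (L₁ * T), by positivity, log 2 / T,
    div_pos (log_pos one_lt_two) hT, fun z hzr hz hz0 => le_mul_exp_of_step
      (fun t _ => norm_nonneg (z t)) hT hB.le (exp_pos _).le ?_ (fun t₀ ht₀ => ?_)
      (fun t₀ ht₀ => ?_)⟩
  · rw [lt_div_iff₀ (by positivity)] at hz0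
    linarith
  · obtain ⟨y, hy₀, hy⟩ := hsol t₀ (z t₀)
    have hdecay := hlin y hy t₀ (t₀ + T) ht₀ (by linarith)
    rw [add_sub_cancel_left, hkT, hy₀] at hdecay
    have hnext := norm_le_add_sq_of_linearization hT.le hL₁ hL₂.le
      (fun t ht => hz t (ht₀.trans ht.1)) (fun t ht => hy t (ht₀.trans ht.1)) hy₀
      (fun t ht => hA t (ht₀.trans ht.1))
      (fun t ht => hgrowth t (ht₀.trans ht.1) _ (hzr t (ht₀.trans ht.1)))
      (fun t ht => hrem t (ht₀.trans ht.1) _ (hzr t (ht₀.trans ht.1)))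
    linarith
  · exact norm_le_exp_mul_of_norm_le_mul_norm hL₁.le (fun t ht => hz t (ht₀.trans ht.1))
      (fun t ht => hgrowth t (ht₀.trans ht.1) _ (hzr t (ht₀.trans ht.1)))

/-- Theorem 3 (Khalil's Theorem 4.13, time-varying Lyapunov linearization):
if the Jacobian linearization `ẏ = A(t)y` at the origin of `ż = f(t,z)` is
exponentially stable and the Jacobian `∂f/∂z` is bounded and Lipschitz on
`B_r` uniformly in `t`, then the origin is (locally) exponentially stable
for the nonlinear system `ż = f(t,z)`. -/
theorem linearization_exponential_stability
    (n : ℕ) (r : ℝ) (hr : 0 < r)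
    (f : ℝ → EuclideanSpace ℝ (Fin n) → EuclideanSpace ℝ (Fin n))
    (Df : ℝ → EuclideanSpace ℝ (Fin n) →
      (EuclideanSpace ℝ (Fin n) →L[ℝ] EuclideanSpace ℝ (Fin n)))
    (hcont : ContinuousOn (fun p : ℝ × EuclideanSpace ℝ (Fin n) => f p.1 p.2)
      (Set.Ici (0:ℝ) ×ˢ Metric.ball 0 r))
    (hf0 : ∀ t, 0 ≤ t → f t 0 = 0)
    (hDf : ∀ t, 0 ≤ t → ∀ z ∈ Metric.ball (0 : EuclideanSpace ℝ (Fin n)) r,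
      HasFDerivAt (f t) (Df t z) z)
    (hDfcont : ∀ t, 0 ≤ t →
      ContinuousOn (Df t) (Metric.ball (0 : EuclideanSpace ℝ (Fin n)) r))
    -- (i) exponential stability of the linear time-varying system ẏ = A(t)y
    (k γ : ℝ) (hk : 1 ≤ k) (hγ : 0 < γ)
    (hlin : ∀ y : ℝ → EuclideanSpace ℝ (Fin n),
      (∀ t, 0 ≤ t → HasDerivAt y (Df t 0 (y t)) t) →
      ∀ t₀ t, 0 ≤ t₀ → t₀ ≤ t →
        ‖y t‖ ≤ k * Real.exp (-γ * (t - t₀)) * ‖y t₀‖)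
    -- (ii) uniform boundedness and Lipschitz continuity of the Jacobian
    (L₁ L₂ : ℝ) (hL₁ : 0 < L₁) (hL₂ : 0 < L₂)
    (hbdd : ∀ t, 0 ≤ t → ∀ z ∈ Metric.ball (0 : EuclideanSpace ℝ (Fin n)) r,
      ‖Df t z‖ ≤ L₁)
    (hlip : ∀ t, 0 ≤ t → ∀ z₁ ∈ Metric.ball (0 : EuclideanSpace ℝ (Fin n)) r,
      ∀ z₂ ∈ Metric.ball (0 : EuclideanSpace ℝ (Fin n)) r,
        ‖Df t z₁ - Df t z₂‖ ≤ L₂ * ‖z₁ - z₂‖) :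
    ∃ δ > (0:ℝ), ∃ C > (0:ℝ), ∃ lam > (0:ℝ),
      ∀ z : ℝ → EuclideanSpace ℝ (Fin n),
        (∀ t, 0 ≤ t → z t ∈ Metric.ball (0 : EuclideanSpace ℝ (Fin n)) r) →
        (∀ t, 0 ≤ t → HasDerivAt z (f t (z t)) t) →
        ‖z 0‖ < δ →
        ∀ t, 0 ≤ t → ‖z t‖ ≤ C * Real.exp (-lam * t) * ‖z 0‖ :=
  linearization_exponential_stability_general n r hr f Df hcont hf0 hDf k γ hk hγ hlin L₁ L₂ hL₁ hL₂
    hbdd hlip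
end
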